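/- arXiv:1804.11175 — 10 statements merged into one kernel-verified Lean document; each statement's English description precedes it below -/
import Mathlib

section
/- Let u be a nonempty word, v a word, and e ≥ 0 an integer, and set y = (uv)^e u. Define z₁ = (uv)^{e+1} and z₂ = (uv)^{e+2}, and let c = |z₁|_y and d = |z₂|_y − |z₁|_y. Then c ≥ 1, d ≥ 1, and for every integer i > e one has |(uv)^i|_y = (i−e)·d + c − d. -/
/-- Number of (possibly overlapping) occurrences of `x` as a contiguous
subword (factor) of `z`. -/
def occCount {α : Type*} [DecidableEq α] (x z : List α) : ℕ :=
  ((List.range (z.length + 1)).filter (fun i => decide (x <+: z.drop i))).length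

/-- `wpow w n` is the word `w` concatenated with itself `n` times. -/
def wpow {α : Type*} (w : List α) (n : ℕ) : List α := (List.replicate n w).flatten

/-- `z` is `y`-bordered: `z ≠ y` and `y` is both a prefix and a suffix of `z`. -/
def IsBordered {α : Type*} (y z : List α) : Prop := z ≠ y ∧ y <+: z ∧ y <:+ z

/-- `x` is interlaced by `y`: `y` is a subword (factor) of every `x`-bordered word. -/
def InterlacedBy {α : Type*} (x y : List α) : Prop :=
  ∀ z : List α, IsBordered x z → y <:+: z

/-!
Write `w = u v` and `y = w^e u`, so that `y` is a prefix of `w^(e+1)` and `|y| ≤ (e+1)|w|`.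
Cutting `w^(m+1) = w · w^m`, the occurrences of `y` in `w^(m+1)` are those in `w^m` plus those
starting inside the first copy of `w`. Once `m ≥ e + 1`, whether `y` occurs at a position `j < |w|`
no longer depends on `m`, so each extra period adds the same number `s ≥ 1` of occurrences
(position `0` is one of them). Hence `|w^i|_y = c + (i - e - 1) s` for `i > e`, and `d = s`.
-/

section Words

variable {α : Type*}

theorem wpow_length (w : List α) (n : ℕ) : (wpow w n).length = n * w.length := by
  simp [wpow]

theorem wpow_add (w : List α) (m n : ℕ) : wpow w (m + n) = wpow w m ++ wpow w n := by
  simp only [wpow, List.replicate_add, List.flatten_append]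

theorem wpow_one (w : List α) : wpow w 1 = w := by
  simp [wpow]

theorem wpow_succ' (w : List α) (n : ℕ) : wpow w (n + 1) = w ++ wpow w n := by
  rw [add_comm, wpow_add, wpow_one]

theorem wpow_prefix_wpow (w : List α) {m n : ℕ} (h : m ≤ n) : wpow w m <+: wpow w n := by
  obtain ⟨k, rfl⟩ := Nat.exists_eq_add_of_le h
  rw [wpow_add]
  exact List.prefix_append _ _

theorem prefix_drop_wpow_iff_of_le {x w : List α} {j m n : ℕ}
    (hx : j + x.length ≤ m * w.length) (hmn : m ≤ n) :
    x <+: (wpow w n).drop j ↔ x <+: (wpow w m).drop j := by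
  obtain ⟨k, rfl⟩ := Nat.exists_eq_add_of_le hmn
  rw [wpow_add, List.drop_append_of_le_length (by rw [wpow_length]; omega)]
  refine ⟨fun h => List.prefix_of_prefix_length_le h (List.prefix_append _ _) ?_,
    List.prefix_append_of_prefix⟩
  rw [List.length_drop, wpow_length]
  omega

end Words

section Occurrences

variable {α : Type*} [DecidableEq α]

theorem one_le_occCount {x z : List α} (h : x <+: z) : 1 ≤ occCount x z :=
  List.length_pos_of_mem (a := 0) (List.mem_filter.mpr ⟨by simp, by simpa using h⟩)

theorem occCount_append (x a b : List α) :
    occCount x (a ++ b) =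
      ((List.range a.length).filter (fun j => x <+: (a ++ b).drop j)).length + occCount x b := by
  rw [occCount, occCount, List.length_append, Nat.add_assoc, List.range_add, List.filter_append,
    List.length_append, List.filter_map, List.length_map]
  congr 2
  refine List.filter_congr fun j _ => ?_
  simp only [Function.comp_apply, List.drop_append]
  rw [List.drop_eq_nil_of_le (by omega), List.nil_append, Nat.add_sub_cancel_left]

def periodOccCount (x w : List α) (n : ℕ) : ℕ :=
  ((List.range w.length).filter (fun j => x <+: (wpow w n).drop j)).length

theorem one_le_periodOccCount {x w : List α} {n : ℕ} (hw : w ≠ []) (h : x <+: wpow w n) :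
    1 ≤ periodOccCount x w n :=
  List.length_pos_of_mem (a := 0)
    (List.mem_filter.mpr ⟨List.mem_range.mpr (List.length_pos_iff.mpr hw), by simpa using h⟩)

theorem occCount_wpow_succ {x w : List α} {n m : ℕ} (hx : x.length ≤ n * w.length)
    (hnm : n ≤ m) :
    occCount x (wpow w (m + 1)) = periodOccCount x w (n + 1) + occCount x (wpow w m) := by
  rw [wpow_succ', occCount_append, ← wpow_succ', periodOccCount]
  congr 2
  refine List.filter_congr fun j hj => ?_
  rw [List.mem_range] at hj
  simp only [decide_eq_decide]
  exact prefix_drop_wpow_iff_of_le (by rw [Nat.succ_mul]; omega) (by omega)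

theorem occCount_wpow_add {x w : List α} {n : ℕ} (hx : x.length ≤ n * w.length) (k : ℕ) :
    occCount x (wpow w (n + k)) = occCount x (wpow w n) + k * periodOccCount x w (n + 1) := by
  induction k with
  | zero => simp
  | succ k ih =>
    rw [← Nat.add_assoc, occCount_wpow_succ hx (by omega), ih]
    ring

end Occurrences

theorem stmt_2 {α : Type} [DecidableEq α] (u v : List α) (hu : u ≠ []) (e : ℕ)
    (y z₁ z₂ : List α) (hy : y = wpow (u ++ v) e ++ u)
    (hz₁ : z₁ = wpow (u ++ v) (e + 1)) (hz₂ : z₂ = wpow (u ++ v) (e + 2))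
    (c d : ℤ) (hc : c = occCount y z₁)
    (hd : d = (occCount y z₂ : ℤ) - (occCount y z₁ : ℤ)) :
    1 ≤ c ∧ 1 ≤ d ∧
      ∀ i : ℕ, e < i →
        (occCount y (wpow (u ++ v) i) : ℤ) = ((i : ℤ) - (e : ℤ)) * d + c - d := by
  set w := u ++ v
  have hyw : y <+: wpow w (e + 1) := by
    rw [hy, wpow_add, wpow_one, List.prefix_append_right_inj]
    exact List.prefix_append u v
  have hylen : y.length ≤ (e + 1) * w.length := by
    simpa [wpow_length] using hyw.length_le
  have hds : d = periodOccCount y w (e + 2) := by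
    rw [hd, hz₂, hz₁, occCount_wpow_add hylen 1]
    push_cast
    ring
  refine ⟨?_, ?_, fun i hi => ?_⟩
  · rw [hc, hz₁]
    exact_mod_cast one_le_occCount hyw
  · rw [hds]
    exact_mod_cast one_le_periodOccCount (by simp [w, hu])
      (hyw.trans (wpow_prefix_wpow w (Nat.le_succ _)))
  · obtain ⟨k, rfl⟩ : ∃ k, i = e + 1 + k := ⟨i - (e + 1), by omega⟩
    rw [occCount_wpow_add hylen k, hds, hc, hz₁]
    push_cast
    ring
end

section
/- Let x and y be nonempty words over an alphabet Σ. There exist two distinct finite sequences, each of whose terms is x or y (tracked by labels, i.e., two distinct sequences over a two-letter index set {a,b} under the substitution a ↦ x, b ↦ y), whose concatenations are equal, if and only if xy = yx. -/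
namespace Stmt3Aux

variable {α : Type}

/-- substitution false ↦ x, true ↦ y -/
def f (x y : List α) (s : List Bool) : List α :=
  (s.map (fun b => if b then y else x)).flatten

lemma f_nil (x y : List α) : f x y [] = [] := rfl

lemma f_cons (x y : List α) (b : Bool) (s : List Bool) :
    f x y (b :: s) = (if b then y else x) ++ f x y s := by
  simp [f]

lemma f_append (x y : List α) (s t : List Bool) :
    f x y (s ++ t) = f x y s ++ f x y t := by
  simp [f]

lemma f_eq_nil {x y : List α} (hx : x ≠ []) (hy : y ≠ []) {s : List Bool}
    (h : f x y s = []) : s = [] := by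
  cases s with
  | nil => rfl
  | cons b s =>
    rw [f_cons] at h
    rcases List.append_eq_nil_iff.mp h with ⟨h1, _⟩
    cases b <;> simp_all

lemma f_swap (x y : List α) (s : List Bool) :
    f x y s = f y x (s.map Bool.not) := by
  induction s with
  | nil => rfl
  | cons b s ih => cases b <;> simp [f_cons, ih]

/-- rewrite map: in alphabet {x, z}, with false ↦ x, true ↦ z -/
def r (s : List Bool) : List Bool :=
  s.flatMap (fun b => if b then [false, true] else [false])

lemma f_r (x z : List α) (s : List Bool) : f x z (r s) = f x (x ++ z) s := by
  induction s with
  | nil => rfl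
  | cons b s ih =>
    have : r (b :: s) = (if b then [false, true] else [false]) ++ r s := by
      cases b <;> rfl
    rw [this, f_append, ih, f_cons]
    cases b <;> simp [f]

lemma key : ∀ n (x y : List α), x ≠ [] → y ≠ [] → x.length + y.length ≤ n →
    ∀ s t : List Bool, x ++ f x y s = y ++ f x y t → x ++ y = y ++ x := by
  intro n
  induction n with
  | zero =>
    intro x y hx hy hn
    have := List.length_pos_iff.mpr hx
    omega
  | succ n ih =>
    intro x y hx hy hn s t E
    have hxpos := List.length_pos_iff.mpr hx
    have hypos := List.length_pos_iff.mpr hy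
    have hxw : x <+: x ++ f x y s := List.prefix_append _ _
    have hyw : y <+: x ++ f x y s := E ▸ List.prefix_append _ _
    rcases le_or_gt x.length y.length with hle | hlt
    · obtain ⟨z, rfl⟩ := List.prefix_of_prefix_length_le hxw hyw hle
      by_cases hz : z = []
      · subst hz; simp
      · have hzpos := List.length_pos_iff.mpr hz
        have E2 : f x (x ++ z) s = z ++ f x (x ++ z) t := by
          rw [List.append_assoc] at E
          exact List.append_cancel_left E
        rw [← f_r, ← f_r] at E2
        cases s with
        | nil =>
          exfalso
          have : ([] : List α) = z ++ f x z (r t) := E2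
          exact hz (List.append_eq_nil_iff.mp this.symm).1
        | cons b s₁ =>
          have hr : r (b :: s₁) = false :: ((if b then [true] else []) ++ r s₁) := by
            cases b <;> rfl
          rw [hr, f_cons] at E2
          simp only [if_neg Bool.false_ne_true, Bool.false_eq_true, ite_false] at E2
          have hcomm : x ++ z = z ++ x := by
            apply ih x z hx hz ?_ _ _ E2
            simp only [List.length_append] at hn
            omega
          rw [List.append_assoc, hcomm, ← List.append_assoc]
    · obtain ⟨z, rfl⟩ := List.prefix_of_prefix_length_le hyw hxw (le_of_lt hlt)
      have hz : z ≠ [] := by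
        intro h; subst h; simp at hlt
      have E2 : f (y ++ z) y t = z ++ f (y ++ z) y s := by
        rw [List.append_assoc] at E
        exact (List.append_cancel_left E).symm
      have conv : ∀ l : List Bool, f (y ++ z) y l = f y z (r (l.map Bool.not)) := by
        intro l; rw [f_swap, f_r]
      rw [conv, conv] at E2
      cases t with
      | nil =>
        exfalso
        have : ([] : List α) = z ++ f y z (r (s.map Bool.not)) := E2
        exact hz (List.append_eq_nil_iff.mp this.symm).1
      | cons b t₁ =>
        have hr : r ((b :: t₁).map Bool.not) =
            false :: ((if !b then [true] else []) ++ r (t₁.map Bool.not)) := by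
          cases b <;> rfl
        rw [hr, f_cons] at E2
        simp only [if_neg Bool.false_ne_true, Bool.false_eq_true, ite_false] at E2
        have hcomm : y ++ z = z ++ y := by
          apply ih y z hy hz ?_ _ _ E2
          simp only [List.length_append] at hn ⊢
          omega
        rw [List.append_assoc, ← hcomm, ← List.append_assoc]

lemma strip {x y : List α} (hx : x ≠ []) (hy : y ≠ []) :
    ∀ s t : List Bool, s ≠ t → f x y s = f x y t → x ++ y = y ++ x := by
  intro s
  induction s with
  | nil =>
    intro t hne h
    exact absurd (f_eq_nil hx hy h.symm).symm hne
  | cons b s₁ ih =>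
    intro t hne h
    cases t with
    | nil =>
      exact absurd (f_eq_nil hx hy h) (by simp)
    | cons c t₁ =>
      by_cases hbc : b = c
      · subst hbc
        rw [f_cons, f_cons] at h
        have h2 : f x y s₁ = f x y t₁ := List.append_cancel_left h
        exact ih t₁ (fun he => hne (by rw [he])) h2
      · rw [f_cons, f_cons] at h
        cases b <;> cases c
        · exact absurd rfl hbc
        · simp only [Bool.false_eq_true, ite_false, ite_true] at h
          exact key (x.length + y.length) x y hx hy le_rfl s₁ t₁ h
        · simp only [Bool.false_eq_true, ite_false, ite_true] at h
          rw [f_swap x y s₁, f_swap x y t₁] at h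
          exact (key (y.length + x.length) y x hy hx le_rfl _ _ h).symm
        · exact absurd rfl hbc

end Stmt3Aux

theorem stmt_3 {α : Type} (x y : List α) (hx : x ≠ []) (hy : y ≠ []) :
    (∃ s t : List Bool, s ≠ t ∧
        (s.map (fun b => if b then y else x)).flatten =
          (t.map (fun b => if b then y else x)).flatten) ↔
      x ++ y = y ++ x := by
  constructor
  · rintro ⟨s, t, hne, h⟩
    exact Stmt3Aux.strip hx hy s t hne h
  · intro h
    refine ⟨[false, true], [true, false], by decide, ?_⟩
    simpa using h
end

section
/- Let x and y be nonempty words over an alphabet Σ, and suppose x is interlaced by y (i.e., y is a subword of every x-bordered word). Then for all words z and t, |zt|_y − |zt|_x ≥ (|z|_y − |z|_x) − 1 (as integers). In particular, taking z empty, |t|_y ≥ |t|_x − 1 for all words t. -/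
section Aux

variable {α : Type} [DecidableEq α]

lemma occCount_eq_card (p w : List α) :
    occCount p w = ((Finset.range (w.length + 1)).filter (fun i => p <+: w.drop i)).card := rfl

lemma occ_bound {p w : List α} {i : ℕ} (hp : p ≠ []) (hi : p <+: w.drop i) :
    i + p.length ≤ w.length := by
  have h1 : p.length ≤ w.length - i := by simpa using hi.length_le
  have h2 : 0 < p.length := List.length_pos_iff.mpr hp
  by_cases hiw : i ≤ w.length
  · omega
  · exfalso
    rw [List.drop_eq_nil_of_le (by omega)] at hi
    exact hp (List.prefix_nil.mp hi)

lemma prefix_of_prefix_append {p A B : List α} (h : p <+: A ++ B) (hl : p.length ≤ A.length) :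
    p <+: A := by
  rw [List.prefix_iff_eq_take] at h ⊢
  rwa [List.take_append_of_le_length hl] at h

/-- The gap lemma: between the ends of two occurrences of `x`, there is the end of an
occurrence of `y`. -/
lemma gap_lemma {x y : List α} (hx : x ≠ []) (hy : y ≠ []) (h : InterlacedBy x y)
    (w : List α) (e1 e2 : ℕ) (h12 : e1 < e2) (he2 : e2 ≤ w.length) (hx1 : x.length ≤ e1)
    (o1 : x <+: w.drop (e1 - x.length)) (o2 : x <+: w.drop (e2 - x.length)) :
    ∃ f, e1 < f ∧ f ≤ e2 ∧ y.length ≤ f ∧ y <+: w.drop (f - y.length) := by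
  set a := e1 - x.length with ha
  set d := e2 - e1 with hd
  set v := (w.drop a).take (e2 - a) with hv
  have hd1 : 1 ≤ d := by omega
  have hvlen : v.length = x.length + d := by
    simp only [hv, List.length_take, List.length_drop]
    omega
  have hxv : x <+: v := List.prefix_take_iff.mpr ⟨o1, by omega⟩
  have hxtake : x = v.take x.length := List.prefix_iff_eq_take.mp hxv
  have hdropd : v.drop d = x := by
    have h1 : v.drop d = (w.drop (a + d)).take (e2 - a - d) := by
      rw [hv, List.drop_take, List.drop_drop]
    have h2 : a + d = e2 - x.length := by omega
    have h3 : e2 - a - d = x.length := by omega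
    rw [h1, h2, h3, ← List.prefix_iff_eq_take.mp o2]
  have hsuf : x <:+ v := ⟨v.take d, by rw [← hdropd]; exact List.take_append_drop d v⟩
  have hne : v ≠ x := by
    intro hvx
    have := congrArg List.length hvx
    rw [hvlen] at this
    omega
  have hin : y <:+: v := h v ⟨hne, hxv, hsuf⟩
  obtain ⟨s, t', hst⟩ := hin
  have hj0pre : y <+: v.drop s.length := by
    rw [← hst, List.append_assoc, List.drop_left]
    exact List.prefix_append y t'
  have hj0len : s.length + y.length ≤ v.length := by
    have := congrArg List.length hst
    simp at this
    omega
  have main : ∀ m j, x.length - j ≤ m → j + y.length ≤ v.length → y <+: v.drop j →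
      ∃ j', j' + y.length ≤ v.length ∧ x.length < j' + y.length ∧ y <+: v.drop j' := by
    intro m
    induction m with
    | zero =>
      intro j hm hle hpre
      have hy1 : 0 < y.length := List.length_pos_iff.mpr hy
      exact ⟨j, hle, by omega, hpre⟩
    | succ m ih =>
      intro j hm hle hpre
      by_cases hc : x.length < j + y.length
      · exact ⟨j, hle, hc, hpre⟩
      push_neg at hc
      have hshift : v.drop (j + d) = (v.drop j).take (x.length - j) := by
        have h1 : v.drop (j + d) = x.drop j := by
          rw [Nat.add_comm j d, ← List.drop_drop, hdropd]
        have h2 : x.drop j = (v.drop j).take (x.length - j) := by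
          conv_lhs => rw [hxtake]
          rw [List.drop_take]
        rw [h1, h2]
      have hpre' : y <+: v.drop (j + d) := by
        rw [hshift]
        exact List.prefix_take_iff.mpr ⟨hpre, by omega⟩
      exact ih (j + d) (by omega) (by omega) hpre'
  obtain ⟨j', hj'le, hj'gt, hj'pre⟩ := main x.length s.length (by omega) hj0len hj0pre
  have htrans : v.drop j' = (w.drop (a + j')).take (e2 - a - j') := by
    rw [hv, List.drop_take, List.drop_drop]
  have hyw : y <+: w.drop (a + j') := by
    rw [htrans] at hj'pre
    exact (List.prefix_take_iff.mp hj'pre).1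
  refine ⟨a + j' + y.length, by omega, by omega, by omega, ?_⟩
  have : a + j' + y.length - y.length = a + j' := by omega
  rwa [this]

/-- The set of "new" occurrences of `p` in `z ++ t`, i.e. those not contained in `z`. -/
def newOcc (p z t : List α) : Finset ℕ :=
  (Finset.range ((z ++ t).length + 1)).filter
    (fun i => p <+: (z ++ t).drop i ∧ z.length < i + p.length)

lemma occCount_append_s5 {p : List α} (hp : p ≠ []) (z t : List α) :
    occCount p (z ++ t) = occCount p z + (newOcc p z t).card := by
  rw [occCount_eq_card, occCount_eq_card]
  set w := z ++ t with hw
  have hp1 : 0 < p.length := List.length_pos_iff.mpr hp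
  have hzw : z.length ≤ w.length := by simp [hw]
  have hsplit : (Finset.range (w.length + 1)).filter (fun i => p <+: w.drop i) =
      ((Finset.range (w.length + 1)).filter
        (fun i => p <+: w.drop i ∧ i + p.length ≤ z.length)) ∪ newOcc p z t := by
    ext i
    simp only [newOcc, Finset.mem_union, Finset.mem_filter, Finset.mem_range, ← hw]
    constructor
    · rintro ⟨h1, h2⟩
      by_cases hc : i + p.length ≤ z.length
      · exact Or.inl ⟨h1, h2, hc⟩
      · exact Or.inr ⟨h1, h2, by omega⟩
    · rintro (⟨h1, h2, _⟩ | ⟨h1, h2, _⟩) <;> exact ⟨h1, h2⟩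
  have hdisj : Disjoint ((Finset.range (w.length + 1)).filter
      (fun i => p <+: w.drop i ∧ i + p.length ≤ z.length)) (newOcc p z t) := by
    rw [Finset.disjoint_left]
    intro i h1 h2
    simp only [newOcc, Finset.mem_filter, ← hw] at h1 h2
    omega
  have hold : ((Finset.range (w.length + 1)).filter
      (fun i => p <+: w.drop i ∧ i + p.length ≤ z.length)) =
      (Finset.range (z.length + 1)).filter (fun i => p <+: z.drop i) := by
    ext i
    simp only [Finset.mem_filter, Finset.mem_range]
    constructor
    · rintro ⟨h1, h2, h3⟩
      have hiz : i ≤ z.length := by omega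
      rw [hw, List.drop_append_of_le_length hiz] at h2
      refine ⟨by omega, prefix_of_prefix_append h2 (by simp [List.length_drop]; omega)⟩
    · rintro ⟨h1, h2⟩
      have hb := occ_bound hp h2
      have hiz : i ≤ z.length := by omega
      refine ⟨by omega, ?_, hb⟩
      rw [hw, List.drop_append_of_le_length hiz]
      exact h2.trans (List.prefix_append _ _)
  rw [hsplit, Finset.card_union_of_disjoint hdisj, hold]

lemma newOcc_card_le {x y : List α} (hx : x ≠ []) (hy : y ≠ []) (h : InterlacedBy x y)
    (z t : List α) : (newOcc x z t).card ≤ (newOcc y z t).card + 1 := by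
  set w := z ++ t with hw
  set E : Finset ℕ := (newOcc x z t).image (fun i => i + x.length) with hE
  set F : Finset ℕ := (newOcc y z t).image (fun i => i + y.length) with hF
  have hEcard : E.card = (newOcc x z t).card :=
    Finset.card_image_of_injective _ (add_left_injective _)
  have hFcard : F.card = (newOcc y z t).card :=
    Finset.card_image_of_injective _ (add_left_injective _)
  have hEmem : ∀ e ∈ E, x.length ≤ e ∧ z.length < e ∧ e ≤ w.length ∧
      x <+: w.drop (e - x.length) := by
    intro e he
    rw [hE, Finset.mem_image] at he
    obtain ⟨i, hi, rfl⟩ := he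
    simp only [newOcc, Finset.mem_filter, Finset.mem_range, ← hw] at hi
    obtain ⟨h1, h2, h3⟩ := hi
    have hb := occ_bound hx h2
    refine ⟨by omega, h3, hb, ?_⟩
    have : i + x.length - x.length = i := by omega
    rwa [this]
  have hFmem : ∀ f, y.length ≤ f → z.length < f → f ≤ w.length →
      y <+: w.drop (f - y.length) → f ∈ F := by
    intro f h1 h2 h3 h4
    rw [hF, Finset.mem_image]
    refine ⟨f - y.length, ?_, by omega⟩
    simp only [newOcc, Finset.mem_filter, Finset.mem_range, ← hw]
    exact ⟨by omega, h4, by omega⟩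
  rcases E.eq_empty_or_nonempty with hemp | hne
  · rw [← hEcard, hemp]
    simp
  set e0 := E.min' hne with he0
  -- predecessor and chosen y-end
  set pp : ℕ → ℕ := fun e => sSup {m | m ∈ E ∧ m < e} with hpp
  set ff : ℕ → ℕ := fun e => sInf {m | m ∈ F ∧ pp e < m ∧ m ≤ e} with hff
  have key : ∀ e ∈ E.erase e0, ff e ∈ F ∧ pp e < ff e ∧ ff e ≤ e ∧ pp e ∈ E := by
    intro e he
    rw [Finset.mem_erase] at he
    obtain ⟨hne0, heE⟩ := he
    have he0lt : e0 < e := lt_of_le_of_ne (E.min'_le e heE) (Ne.symm hne0)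
    have hSne : ({m | m ∈ E ∧ m < e} : Set ℕ).Nonempty := ⟨e0, E.min'_mem hne, he0lt⟩
    have hSbdd : BddAbove {m | m ∈ E ∧ m < e} := ⟨e, fun m hm => hm.2.le⟩
    have hpmem : pp e ∈ E ∧ pp e < e := Nat.sSup_mem hSne hSbdd
    obtain ⟨hpE, hplt⟩ := hpmem
    obtain ⟨hxp, hzp, hwp, hop⟩ := hEmem _ hpE
    obtain ⟨hxe, hze, hwe, hoe⟩ := hEmem _ heE
    obtain ⟨f, hf1, hf2, hf3, hf4⟩ := gap_lemma hx hy h w (pp e) e hplt hwe hxp hop hoe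
    have hfF : f ∈ F := hFmem f hf3 (by omega) (by omega) hf4
    have hTne : ({m | m ∈ F ∧ pp e < m ∧ m ≤ e} : Set ℕ).Nonempty := ⟨f, hfF, hf1, hf2⟩
    have hT := Nat.sInf_mem hTne
    exact ⟨hT.1, hT.2.1, hT.2.2, hpE⟩
  have haux : ∀ e ∈ E.erase e0, ∀ e' ∈ E.erase e0, e < e' → ff e < ff e' := by
    intro e he e' he' hlt
    obtain ⟨_, _, hfe_le, _⟩ := key e he
    obtain ⟨_, hpp'lt, _, _⟩ := key e' he'
    have heE : e ∈ E := (Finset.mem_erase.mp he).2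
    have hple : e ≤ pp e' :=
      le_csSup ⟨e', fun m hm => hm.2.le⟩ (Set.mem_setOf.mpr ⟨heE, hlt⟩)
    omega
  have hinj : Set.InjOn ff (E.erase e0) := by
    intro e he e' he' heq
    rcases Nat.lt_trichotomy e e' with hc | hc | hc
    · exact absurd heq (Nat.ne_of_lt (haux e he e' he' hc))
    · exact hc
    · exact absurd heq.symm (Nat.ne_of_lt (haux e' he' e he hc))
  have hcard : (E.erase e0).card ≤ F.card :=
    Finset.card_le_card_of_injOn ff (fun e he => (key e he).1) hinj
  have herase : (E.erase e0).card + 1 = E.card :=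
    Finset.card_erase_add_one (E.min'_mem hne)
  omega

end Aux

theorem stmt_5 {α : Type} [DecidableEq α] (x y : List α) (hx : x ≠ []) (hy : y ≠ [])
    (h : InterlacedBy x y) :
    (∀ z t : List α,
        ((occCount y z : ℤ) - (occCount x z : ℤ)) - 1 ≤
          (occCount y (z ++ t) : ℤ) - (occCount x (z ++ t) : ℤ)) ∧
      (∀ t : List α, (occCount x t : ℤ) - 1 ≤ (occCount y t : ℤ)) := by
  have main : ∀ z t : List α,
      ((occCount y z : ℤ) - (occCount x z : ℤ)) - 1 ≤
        (occCount y (z ++ t) : ℤ) - (occCount x (z ++ t) : ℤ) := by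
    intro z t
    rw [occCount_append_s5 hx z t, occCount_append_s5 hy z t]
    have := newOcc_card_le hx hy h z t
    push_cast
    omega
  refine ⟨main, fun t => ?_⟩
  have h1 := main [] t
  have h2 : occCount x ([] : List α) = 0 := by simp [occCount, hx]
  have h3 : occCount y ([] : List α) = 0 := by simp [occCount, hy]
  rw [List.nil_append] at h1
  rw [h2, h3] at h1
  push_cast at h1
  omega
end

section
/- Let Σ be a finite alphabet and let x and y be nonempty words over Σ. If there exists a y-bordered word z such that x is not a subword of z, then there exists such a word z with |z| < (|x|+1)(2|y|+3). -/
/-!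
Cut out the middle of a long `y`-bordered word `z` avoiding `x`. For each cut position `i`
with `|y| ≤ i ≤ |z| - |y|`, record the length of the longest proper prefix of `x` that ends at
position `i`. There are more than `|x|` such positions once `|z| ≥ |x| + 2|y|` but only `|x|`
possible values, so two positions `a < b` carry the same value. Deleting `z[a, b)` keeps the
border `y` at both ends, and creates no occurrence of `x`: one straddling the cut would begin
with a proper prefix of `x` ending at `a`, hence (by maximality and the equal values) one ending
at `b`, giving an occurrence of `x` in `z` itself. So a shortest witness has length
`< |x| + 2|y|`, which is well below `(|x| + 1)(2|y| + 3)`.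
-/

section Overlap

variable {α : Type*} [DecidableEq α]

/-- The length of the longest proper prefix of `x` that is a suffix of `w`. -/
def overlapLength (x w : List α) : ℕ :=
  Nat.findGreatest (fun ℓ => x.take ℓ <:+ w) (x.length - 1)

theorem overlapLength_le (x w : List α) : overlapLength x w ≤ x.length - 1 :=
  Nat.findGreatest_le _

theorem take_overlapLength_suffix (x w : List α) : x.take (overlapLength x w) <:+ w :=
  Nat.findGreatest_spec (P := fun ℓ => x.take ℓ <:+ w) (Nat.zero_le _) (by simp)

theorem suffix_take_overlapLength {x w p q : List α} (hx : p ++ q = x) (hq : q ≠ [])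
    (hp : p <:+ w) : p <:+ x.take (overlapLength x w) := by
  have hpx : p.length < x.length := by
    subst hx; simpa using List.length_pos_iff.mpr hq
  have hle : p.length ≤ overlapLength x w :=
    Nat.le_findGreatest (by omega) (by rwa [← hx, List.take_left])
  exact List.suffix_of_suffix_length_le hp (take_overlapLength_suffix x w) (by rw [List.length_take]; omega)

theorem not_infix_take_append_drop {x z : List α} (hxz : ¬ x <:+: z) {a b : ℕ}
    (h : overlapLength x (z.take a) = overlapLength x (z.take b)) :
    ¬ x <:+: z.take a ++ z.drop b := by
  rw [List.infix_append_iff_ne_nil]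
  rintro (hx | hx | ⟨p, q, -, hq, rfl, hp, hqd⟩)
  · exact hxz (hx.trans (List.take_prefix a z).isInfix)
  · exact hxz (hx.trans (List.drop_suffix b z).isInfix)
  · have hpa := suffix_take_overlapLength rfl hq hp
    rw [h] at hpa
    have hpb : p <:+ z.take b := hpa.trans (take_overlapLength_suffix _ _)
    obtain ⟨c, hc⟩ := hpb
    obtain ⟨d, hd⟩ := hqd
    exact hxz ⟨c, d, by rw [← List.take_append_drop b z, ← hc, ← hd]; simp⟩

end Overlap

section Shortening

variable {α : Type*}

theorem isBordered_take_append_drop {y z : List α} (hy : y ≠ []) (hpre : y <+: z)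
    (hsuf : y <:+ z) {a b : ℕ} (ha : y.length ≤ a) (hb : b + y.length ≤ z.length) :
    IsBordered y (z.take a ++ z.drop b) := by
  have hypos : 0 < y.length := List.length_pos_iff.mpr hy
  refine ⟨fun he => ?_, ?_, ?_⟩
  · have := congrArg List.length he
    simp only [List.length_append, List.length_take, List.length_drop] at this
    omega
  · exact (List.prefix_take_iff.mpr ⟨hpre, ha⟩).trans (List.prefix_append _ _)
  · refine (List.suffix_of_suffix_length_le hsuf (List.drop_suffix b z) ?_).trans
      (List.suffix_append _ _)
    simp only [List.length_drop]
    omega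

theorem exists_shorter_of_length_le {x y z : List α} (hy : y ≠ []) (hpre : y <+: z)
    (hsuf : y <:+ z) (hxz : ¬ x <:+: z) (hlen : x.length + 2 * y.length ≤ z.length) :
    ∃ z', IsBordered y z' ∧ ¬ x <:+: z' ∧ z'.length < z.length := by
  classical
  have hx : x ≠ [] := by rintro rfl; exact hxz List.nil_infix
  have hxpos : 0 < x.length := List.length_pos_iff.mpr hx
  have hmaps : ∀ i ∈ Finset.Icc y.length (z.length - y.length),
      overlapLength x (z.take i) ∈ Finset.range x.length := fun i _ =>
    Finset.mem_range.mpr ((overlapLength_le x _).trans_lt (by omega))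
  have hcard : (Finset.range x.length).card
      < (Finset.Icc y.length (z.length - y.length)).card := by
    rw [Finset.card_range, Nat.card_Icc]
    omega
  obtain ⟨a, ha, b, hb, hne, hab⟩ := Finset.exists_ne_map_eq_of_card_lt_of_maps_to hcard hmaps
  wlog hlt : a < b generalizing a b
  · exact this b hb a ha hne.symm hab.symm (by omega)
  rw [Finset.mem_Icc] at ha hb
  refine ⟨z.take a ++ z.drop b,
    isBordered_take_append_drop hy hpre hsuf ha.1 (by omega),
    not_infix_take_append_drop hxz hab, ?_⟩
  simp only [List.length_append, List.length_take, List.length_drop]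
  omega

theorem exists_isBordered_not_infix_length_lt {x y : List α} (hy : y ≠ [])
    (h : ∃ z, IsBordered y z ∧ ¬ x <:+: z) :
    ∃ z, IsBordered y z ∧ ¬ x <:+: z ∧ z.length < x.length + 2 * y.length := by
  classical
  have hex : ∃ n, ∃ z : List α, IsBordered y z ∧ ¬ x <:+: z ∧ z.length = n :=
    let ⟨z, hz, hxz⟩ := h; ⟨_, z, hz, hxz, rfl⟩
  obtain ⟨z, hz, hxz, hzlen⟩ := Nat.find_spec hex
  refine ⟨z, hz, hxz, lt_of_not_ge fun hlen => ?_⟩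
  obtain ⟨z', hz', hxz', hlt⟩ := exists_shorter_of_length_le hy hz.2.1 hz.2.2 hxz hlen
  exact Nat.find_min hex (hzlen ▸ hlt) ⟨z', hz', hxz', rfl⟩

end Shortening

theorem stmt_8_general {α : Type} (x y : List α) (hy : y ≠ [])
    (h : ∃ z : List α, IsBordered y z ∧ ¬ x <:+: z) :
    ∃ z : List α, IsBordered y z ∧ ¬ x <:+: z ∧
      z.length < (x.length + 1) * (2 * y.length + 3) := by
  obtain ⟨z, hz, hxz, hlen⟩ := exists_isBordered_not_infix_length_lt hy h
  exact ⟨z, hz, hxz, hlen.trans_le (by nlinarith)⟩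

theorem stmt_8 {α : Type} [Fintype α] (x y : List α) (hx : x ≠ []) (hy : y ≠ [])
    (h : ∃ z : List α, IsBordered y z ∧ ¬ x <:+: z) :
    ∃ z : List α, IsBordered y z ∧ ¬ x <:+: z ∧
      z.length < (x.length + 1) * (2 * y.length + 3) :=
  stmt_8_general x y hy h
end

section
/- Let Σ be an alphabet containing at least the three distinct symbols 0, 1, 2, and let x, y be words over Σ. If x is a subword of y0y, of y1y, and of y2y, then x is a subword of y. -/
namespace List

variable {α : Type*}

/-- `x` sits in `y ++ [x[k]] ++ y` with its `k`-th letter on the middle one. -/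
def CrossesAt (y x : List α) (k : ℕ) : Prop :=
  k < x.length ∧ x.take k <:+ y ∧ x.drop (k + 1) <+: y

theorem crossesAt_length_append_cons {y u v : List α} (d : α) (hu : u <:+ y) (hv : v <+: y) :
    CrossesAt y (u ++ d :: v) u.length := by
  refine ⟨by simp, ?_, ?_⟩ <;> simpa

theorem exists_crossesAt_of_infix {y x : List α} {d : α} (h : x <:+: y ++ [d] ++ y)
    (hxy : ¬ x <:+: y) : ∃ k, CrossesAt y x k ∧ x[k]? = some d := by
  suffices ∃ u v, x = u ++ d :: v ∧ u <:+ y ∧ v <+: y by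
    obtain ⟨u, v, rfl, hu, hv⟩ := this
    exact ⟨u.length, crossesAt_length_append_cons d hu hv, by simp⟩
  rw [append_assoc, infix_append_iff] at h
  rcases h with h | h | ⟨u, w, rfl, hu, hw⟩
  · exact absurd h hxy
  · rcases infix_cons_iff.mp h with h | h
    · rcases prefix_cons_iff.mp h with rfl | ⟨v, rfl, hv⟩
      · exact absurd nil_infix hxy
      · exact ⟨[], v, rfl, nil_suffix, hv⟩
    · exact absurd h hxy
  · rcases prefix_cons_iff.mp hw with rfl | ⟨v, rfl, hv⟩
    · exact absurd (by simpa using hu.isInfix) hxy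
    · exact ⟨u, v, rfl, hu, hv⟩

theorem getElem?_add_sub_eq_of_take_suffix {x y : List α} {i j k : ℕ} (hi : x.take i <:+ y)
    (hj : x.take j <:+ y) (hij : i ≤ j) (hjx : j ≤ x.length) (hk : k < i) :
    x[k]? = x[k + (j - i)]? := by
  obtain ⟨s, hs⟩ := suffix_of_suffix_length_le hi hj (by simp; omega)
  have hs_len : s.length = j - i := by
    have := congrArg length hs
    simp at this
    omega
  calc x[k]? = (x.take i)[k]? := (getElem?_take_of_lt hk).symm
    _ = (s ++ x.take i)[s.length + k]? := by
      rw [getElem?_append_right (by omega), Nat.add_sub_cancel_left]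
    _ = x[k + (j - i)]? := by rw [hs, hs_len, getElem?_take_of_lt (by omega), Nat.add_comm]

theorem getElem?_add_eq_of_drop_prefix {x y : List α} {i j l : ℕ} (hi : x.drop i <+: y)
    (hj : x.drop j <+: y) (hij : i ≤ j) (hjl : j + l < x.length) :
    x[i + l]? = x[j + l]? := by
  obtain ⟨t, ht⟩ := prefix_of_prefix_length_le hj hi (by simp; omega)
  calc x[i + l]? = (x.drop i)[l]? := by simp
    _ = (x.drop j)[l]? := by rw [← ht, getElem?_append_left (by simp; omega)]
    _ = x[j + l]? := by simp

theorem CrossesAt.getElem?_eq_of_lt_of_lt {x y : List α} {p q r : ℕ} (hp : CrossesAt y x p)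
    (hq : CrossesAt y x q) (hr : CrossesAt y x r) (hpq : p < q) (hqr : q < r) :
    x[p]? = x[r]? :=
  calc x[p]? = x[p + (r - q)]? :=
        getElem?_add_sub_eq_of_take_suffix hq.2.1 hr.2.1 hqr.le hr.1.le hpq
    _ = x[p + 1 + (r - q - 1)]? := by congr 1; omega
    _ = x[q + 1 + (r - q - 1)]? :=
        getElem?_add_eq_of_drop_prefix hp.2.2 hq.2.2 (by omega) (by have := hr.1; omega)
    _ = x[r]? := by congr 1; omega

theorem CrossesAt.getElem?_eq_or_eq_or_eq {x y : List α} {p q r : ℕ} (hp : CrossesAt y x p)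
    (hq : CrossesAt y x q) (hr : CrossesAt y x r) (hpq : p ≠ q) (hpr : p ≠ r) (hqr : q ≠ r) :
    x[p]? = x[q]? ∨ x[p]? = x[r]? ∨ x[q]? = x[r]? := by
  wlog hpq' : p < q generalizing p q r
  · have := this hq hp hr hpq.symm hqr hpr (by omega)
    grind
  wlog hqr' : q < r generalizing p q r
  · rcases Nat.lt_or_gt_of_ne hpr with hpr' | hrp
    · have := this hp hr hq hpr hpq hqr.symm hpr' (by omega)
      grind
    · have := this hr hp hq hpr.symm hqr.symm hpq hrp hpq'
      grind
  exact Or.inr (Or.inl (hp.getElem?_eq_of_lt_of_lt hq hr hpq' hqr'))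

end List

theorem stmt_9 {α : Type} (a b c : α) (hab : a ≠ b) (hac : a ≠ c) (hbc : b ≠ c)
    (x y : List α)
    (h0 : x <:+: y ++ [a] ++ y) (h1 : x <:+: y ++ [b] ++ y) (h2 : x <:+: y ++ [c] ++ y) :
    x <:+: y := by
  by_contra hxy
  obtain ⟨p, hp, hpa⟩ := List.exists_crossesAt_of_infix h0 hxy
  obtain ⟨q, hq, hqb⟩ := List.exists_crossesAt_of_infix h1 hxy
  obtain ⟨r, hr, hrc⟩ := List.exists_crossesAt_of_infix h2 hxy
  have hpq : p ≠ q := by rintro rfl; simp_all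
  have hpr : p ≠ r := by rintro rfl; simp_all
  have hqr : q ≠ r := by rintro rfl; simp_all
  rcases hp.getElem?_eq_or_eq_or_eq hq hr hpq hpr hqr with h | h | h <;> simp_all
end

section
/- Let Σ be a finite alphabet with |Σ| ≥ 3 and let x, y be words over Σ with y nonempty. Then x is a subword of yty for every word t of length 1 if and only if y is interlaced by x (i.e., x is a subword of every y-bordered word). -/
namespace Interlace
variable {α : Type*}

lemma getElem_mid (p q : List α) (t : α) :
    (p ++ t :: q)[p.length]'(by simp) = t := by
  rw [List.getElem_append_right (le_refl p.length)]
  simp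

lemma getElem_left (p q : List α) (t : α) {k : ℕ} (hk : k < p.length) :
    (p ++ t :: q)[k]'(by simp; omega) = p[k] := by
  rw [List.getElem_append_left]

lemma getElem_right (p q : List α) (t : α) {k : ℕ} (hk : k < q.length) :
    (p ++ t :: q)[p.length + 1 + k]'(by simp; omega) = q[k] := by
  have e : p ++ t :: q = (p ++ [t]) ++ q := by simp
  rw [List.getElem_of_eq e,
    List.getElem_append_right (by simp : (p ++ [t]).length ≤ p.length + 1 + k)]
  congr 1
  simp

lemma getElem_idx {l : List α} {i j : ℕ} (h : i = j) (hi : i < l.length) :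
    l[i] = l[j]'(h ▸ hi) := by subst h; rfl

/-- crossing occurrence extraction -/
lemma cross (y x : List α) (t : α) (h : x <:+: y ++ t :: y) (hn : ¬ x <:+: y) :
    ∃ p q, x = p ++ t :: q ∧ p <:+ y ∧ q <+: y := by
  obtain ⟨s, e, hse⟩ := h
  by_cases h1 : s.length + x.length ≤ y.length
  · exfalso
    apply hn
    have hpre : s ++ x <+: y :=
      List.prefix_of_prefix_length_le ⟨e, hse⟩ (List.prefix_append _ _) (by simpa using h1)
    exact (List.suffix_append s x).isInfix.trans hpre.isInfix
  by_cases h2 : y.length < s.length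
  · exfalso
    apply hn
    have hxd : x ++ e = (y ++ t :: y).drop s.length := by
      rw [← hse, List.append_assoc, List.drop_left]
    set m := s.length - y.length - 1 with hm
    have hd : (y ++ t :: y).drop s.length = y.drop m := by
      rw [List.drop_append, List.drop_eq_nil_of_le (by omega), List.nil_append,
        show s.length - y.length = m + 1 by omega, List.drop_succ_cons]
    have hx : x <+: y.drop m := ⟨e, by rw [← hd, ← hxd]⟩
    exact hx.isInfix.trans (List.drop_suffix _ _).isInfix
  push_neg at h1 h2
  have hxe : x ++ e = y.drop s.length ++ t :: y := by
    have h3 := congrArg (List.drop s.length) hse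
    rwa [List.append_assoc, List.drop_left, List.drop_append_of_le_length h2] at h3
  set i := y.length - s.length with hi
  have hlen_drop : (y.drop s.length).length = i := by simp [hi]
  have hix : i < x.length := by omega
  have hgt : x[i] = t := by
    have e1 : x[i] = (x ++ e)[i]'(by simp; omega) := (List.getElem_append_left hix).symm
    rw [e1, List.getElem_of_eq hxe, getElem_idx hlen_drop.symm, getElem_mid]
  refine ⟨x.take i, x.drop (i + 1), ?_, ?_, ?_⟩
  · conv_lhs => rw [← List.take_append_drop i x, List.drop_eq_getElem_cons hix, hgt]
  · have h4 : (x ++ e).take i = y.drop s.length := by rw [hxe, List.take_left' hlen_drop]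
    rw [List.take_append_of_le_length (le_of_lt hix)] at h4
    rw [h4]
    exact List.drop_suffix _ _
  · have h5 : (x ++ e).drop (i + 1) = y := by
      rw [hxe, show y.drop s.length ++ t :: y = (y.drop s.length ++ [t]) ++ y by simp,
        List.drop_left' (by simp [hlen_drop])]
    rw [List.drop_append_of_le_length (by omega)] at h5
    exact ⟨e, h5⟩

lemma helper (y x : List α) (a b c : α) (pa qa pb qb pc qc : List α)
    (hxa : x = pa ++ a :: qa) (hqa : qa <+: y)
    (hxb : x = pb ++ b :: qb) (hpb : pb <:+ y) (hqb : qb <+: y)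
    (hxc : x = pc ++ c :: qc) (hpc : pc <:+ y)
    (h1 : pa.length < pb.length) (h2 : pb.length < pc.length) (hac : a ≠ c) : False := by
  set n := y.length
  set ia := pa.length
  set ib := pb.length
  set ic := pc.length
  have lxa : x.length = ia + 1 + qa.length := by rw [hxa]; simp; omega
  have lxb : x.length = ib + 1 + qb.length := by rw [hxb]; simp; omega
  have lxc : x.length = ic + 1 + qc.length := by rw [hxc]; simp; omega
  have hicx : ic < x.length := by omega
  have hqal : qa.length ≤ n := hqa.length_le
  have hqbl : qb.length ≤ n := hqb.length_le
  have hpbl : ib ≤ n := hpb.length_le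
  have hpcl : ic ≤ n := hpc.length_le
  set k := ic - ib - 1 with hk
  have hkqb : k < qb.length := by omega
  -- y[k] = c
  have hc1 : x[ic]'hicx = c := by
    rw [List.getElem_of_eq hxc, getElem_mid]
  have hc2 : x[ic]'hicx = y[k]'(by omega) := by
    rw [List.getElem_of_eq hxb, getElem_idx (show ic = ib + 1 + k by omega),
      getElem_right pb qb b hkqb]
    exact hqb.getElem hkqb
  -- y[n - ib + ia] = a
  have hiax : ia < x.length := by omega
  have ha1 : x[ia]'hiax = a := by rw [List.getElem_of_eq hxa, getElem_mid]
  have ha2 : x[ia]'hiax = y[n - ib + ia]'(by omega) := by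
    rw [List.getElem_of_eq hxb, getElem_left pb qb b h1]
    exact hpb.getElem h1
  -- the middle position j
  set j := ia + 1 + k with hj
  have hjx : j < x.length := by omega
  have hkqa : k < qa.length := by omega
  have hj1 : x[j]'hjx = y[k]'(by omega) := by
    rw [List.getElem_of_eq hxa, getElem_right pa qa a hkqa]
    exact hqa.getElem hkqa
  have hjic : j < ic := by omega
  have hj2 : x[j]'hjx = y[n - ib + ia]'(by omega) := by
    rw [List.getElem_of_eq hxc, getElem_left pc qc c hjic]
    rw [hpc.getElem hjic]
    exact getElem_idx (by omega) _
  apply hac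
  rw [← ha1, ha2, ← hj2, hj1, ← hc2, hc1]

lemma main {α : Type} [Fintype α] (hcard : 3 ≤ Fintype.card α) (x y : List α)
    (h : ∀ t : α, x <:+: y ++ t :: y) : x <:+: y := by
  by_contra hn
  obtain ⟨a, b, c, hab, hac, hbc⟩ := Fintype.two_lt_card_iff.mp (by omega : 2 < Fintype.card α)
  obtain ⟨pa, qa, hxa, hpa, hqa⟩ := cross y x a (h a) hn
  obtain ⟨pb, qb, hxb, hpb, hqb⟩ := cross y x b (h b) hn
  obtain ⟨pc, qc, hxc, hpc, hqc⟩ := cross y x c (h c) hn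
  have hgm : ∀ (p q : List α) (t : α) (hx : x = p ++ t :: q),
      x[p.length]'(by rw [hx]; simp) = t := fun p q t hx => by
    rw [List.getElem_of_eq hx, getElem_mid]
  have hne : ∀ (p q p' q' : List α) (t t' : α), x = p ++ t :: q → x = p' ++ t' :: q' →
      t ≠ t' → p.length ≠ p'.length := by
    intro p q p' q' t t' hx hx' htt hl
    exact htt (by rw [← hgm p q t hx, ← hgm p' q' t' hx', getElem_idx hl])
  have nab := hne _ _ _ _ _ _ hxa hxb hab
  have nac := hne _ _ _ _ _ _ hxa hxc hac
  have nbc := hne _ _ _ _ _ _ hxb hxc hbc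
  rcases lt_trichotomy pa.length pb.length with h1 | h1 | h1
  · rcases lt_trichotomy pb.length pc.length with h2 | h2 | h2
    · exact helper y x a b c pa qa pb qb pc qc hxa hqa hxb hpb hqb hxc hpc h1 h2 hac
    · exact nbc h2
    · rcases lt_trichotomy pa.length pc.length with h3 | h3 | h3
      · exact helper y x a c b pa qa pc qc pb qb hxa hqa hxc hpc hqc hxb hpb h3 h2 hab
      · exact nac h3
      · exact helper y x c a b pc qc pa qa pb qb hxc hqc hxa hpa hqa hxb hpb h3 h1 hbc.symm
  · exact nab h1
  · rcases lt_trichotomy pa.length pc.length with h2 | h2 | h2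
    · exact helper y x b a c pb qb pa qa pc qc hxb hqb hxa hpa hqa hxc hpc h1 h2 hbc
    · exact nac h2
    · rcases lt_trichotomy pb.length pc.length with h3 | h3 | h3
      · exact helper y x b c a pb qb pc qc pa qa hxb hqb hxc hpc hqc hxa hpa h3 h2 hab.symm
      · exact nbc h3
      · exact helper y x c b a pc qc pb qb pa qa hxc hqc hxb hpb hqb hxa hpa h3 h1 hac.symm

end Interlace

theorem stmt_10 {α : Type} [Fintype α] (hcard : 3 ≤ Fintype.card α)
    (x y : List α) (hy : y ≠ []) :
    (∀ t : List α, t.length = 1 → x <:+: y ++ t ++ y) ↔ InterlacedBy y x := by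
  constructor
  · intro h z hz
    have hx : x <:+: y := Interlace.main hcard x y (fun t => by simpa using h [t] rfl)
    exact hx.trans hz.2.1.isInfix
  · intro h t ht
    apply h (y ++ t ++ y)
    refine ⟨?_, ⟨t ++ y, by simp⟩, ⟨y ++ t, by simp⟩⟩
    intro heq
    have hl := congrArg List.length heq
    simp [ht] at hl
end

section
/- Let Σ = {0,1}, let k ≥ 1 be an integer, and let x = 0^k 1. Then for every word y over Σ: y belongs to the language (1 + 01 + 001 + ⋯ + 0^{k−1}1)⁺ 0^k 0^* (i.e., y is a nonempty concatenation of blocks each of the form 0^i 1 with 0 ≤ i ≤ k−1, followed by 0^m for some m ≥ k) if and only if x is not a subword of y but x is a subword of every y-bordered word. -/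
/-- Over `Σ = {0,1}` (encoded as `Bool` with `0 = false`, `1 = true`), the language
`A = 01⁺ ∪ 10⁺ ∪ 0⁺1 ∪ 1⁺0`. -/
def memA (x : List Bool) : Prop :=
  ∃ i : ℕ, 1 ≤ i ∧
    (x = false :: List.replicate i true ∨ x = true :: List.replicate i false ∨
     x = List.replicate i false ++ [true] ∨ x = List.replicate i true ++ [false])

/-!
Every binary word factors as `0^{i₁} 1 ⋯ 0^{iₙ} 1 0^r`, and `0^k 1` is a factor of it iff some
`iⱼ ≥ k`. For such a word `y` with all `iⱼ < k`, the `y`-bordered word `y 1 y` contains `0^k 1`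
iff `r ≥ k`, and if `n = 0` the `y`-bordered word `y 0` contains no `1` at all. Conversely, if
`y = V 1 0^m` with `m ≥ k`, a `y`-bordered word `z = y t` either has a `1` in `t`, preceded in `z`
by at least `m` zeros, or has `t = 0^j` with `j ≥ 1`; the latter is impossible, since `z` would
end both in `1 0^m` and in `0^{m+1}`.
-/

open List

namespace ZerosOne

def blockWord (bs : List ℕ) : List Bool :=
  (bs.map fun i => replicate i false ++ [true]).flatten

@[simp]
lemma blockWord_nil : blockWord [] = [] := rfl

@[simp]
lemma blockWord_cons (i : ℕ) (bs : List ℕ) :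
    blockWord (i :: bs) = replicate i false ++ true :: blockWord bs := by
  simp [blockWord]

lemma exists_eq_blockWord_append_replicate (w : List Bool) :
    ∃ bs r, w = blockWord bs ++ replicate r false := by
  induction w with
  | nil => exact ⟨[], 0, rfl⟩
  | cons a w ih =>
    obtain ⟨bs, r, rfl⟩ := ih
    cases a with
    | true => exact ⟨0 :: bs, r, by simp⟩
    | false =>
      cases bs with
      | nil => exact ⟨[], r + 1, by simp [replicate_succ]⟩
      | cons i bs => exact ⟨(i + 1) :: bs, r, by simp [replicate_succ]⟩

lemma isBordered_replicate_succ {α : Type*} (a : α) (n : ℕ) :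
    IsBordered (replicate n a) (replicate (n + 1) a) :=
  ⟨fun h => by simpa using congrArg length h, ⟨[a], (replicate_succ' ..).symm⟩, ⟨[a], rfl⟩⟩

lemma isBordered_append_cons_self {α : Type*} (y : List α) (a : α) :
    IsBordered y (y ++ a :: y) :=
  ⟨fun h => by simpa using congrArg length h, prefix_append _ _, ⟨y ++ [a], by simp⟩⟩

variable {k : ℕ}

lemma not_infix_replicate_false (m : ℕ) :
    ¬ replicate k false ++ [true] <:+: replicate m false := fun h => by
  simpa using h.subset (mem_append_right _ (mem_singleton_self true))

lemma replicate_false_append_true_prefix_iff {i : ℕ} {r : List Bool} :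
    replicate k false ++ [true] <+: replicate i false ++ true :: r ↔ k = i := by
  induction k generalizing i with
  | zero => cases i <;> simp [replicate_succ]
  | succ k ih => cases i <;> simp [replicate_succ, ih]

lemma replicate_false_append_true_infix_iff {i : ℕ} {r : List Bool} :
    replicate k false ++ [true] <:+: replicate i false ++ true :: r ↔
      k ≤ i ∨ replicate k false ++ [true] <:+: r := by
  induction i with
  | zero =>
    have := replicate_false_append_true_prefix_iff (k := k) (i := 0) (r := r)
    simp_all [infix_cons_iff]
  | succ i ih =>
    have := replicate_false_append_true_prefix_iff (k := k) (i := i + 1) (r := r)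
    rw [replicate_succ, cons_append, infix_cons_iff, ← cons_append, ← replicate_succ, this, ih,
      Nat.le_add_one_iff]
    tauto

lemma infix_blockWord_append_iff {bs : List ℕ} (hbs : ∀ i ∈ bs, i < k) {w : List Bool} :
    replicate k false ++ [true] <:+: blockWord bs ++ w ↔
      replicate k false ++ [true] <:+: w := by
  induction bs with
  | nil => rfl
  | cons i bs ih =>
    rw [blockWord_cons, append_assoc, cons_append, replicate_false_append_true_infix_iff,
      ih fun j hj => hbs j (mem_cons_of_mem i hj)]
    simp [hbs i mem_cons_self]

lemma not_infix_blockWord_append_replicate {bs : List ℕ} (hbs : ∀ i ∈ bs, i < k) (m : ℕ) :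
    ¬ replicate k false ++ [true] <:+: blockWord bs ++ replicate m false := by
  rw [infix_blockWord_append_iff hbs]
  exact not_infix_replicate_false m

lemma forall_lt_of_not_infix_blockWord_append {bs : List ℕ} {w : List Bool}
    (h : ¬ replicate k false ++ [true] <:+: blockWord bs ++ w) : ∀ i ∈ bs, i < k := by
  induction bs with
  | nil => simp
  | cons i bs ih =>
    rw [blockWord_cons, append_assoc, cons_append, replicate_false_append_true_infix_iff,
      not_or, not_le] at h
    simpa [h.1] using ih h.2

lemma infix_of_isBordered {m : ℕ} (hkm : k ≤ m) {V z : List Bool}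
    (hz : IsBordered (V ++ true :: replicate m false) z) :
    replicate k false ++ [true] <:+: z := by
  obtain ⟨hne, ⟨t, rfl⟩, hsuf⟩ := hz
  obtain ⟨cs, j, rfl⟩ := exists_eq_blockWord_append_replicate t
  cases cs with
  | cons c cs =>
    have hocc : replicate k false ++ [true] <:+:
        replicate (m + c) false ++ true :: (blockWord cs ++ replicate j false) :=
      replicate_false_append_true_infix_iff.2 (Or.inl (by omega))
    exact hocc.trans ⟨V ++ [true], [], by simp [← replicate_append_replicate]⟩
  | nil =>
    exfalso
    rw [blockWord_nil, nil_append] at hne hsuf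
    obtain ⟨j, rfl⟩ : ∃ j', j = j' + 1 :=
      Nat.exists_eq_add_one.2 (Nat.pos_of_ne_zero fun hj => hne (by simp [hj]))
    have hone : true :: replicate m false <:+ V ++ true :: replicate m false ++
        replicate (j + 1) false := (suffix_append V _).trans hsuf
    have hzero : replicate (m + 1) false <:+ V ++ true :: replicate m false ++
        replicate (j + 1) false :=
      ⟨V ++ true :: replicate j false, by
        simp only [append_assoc, cons_append, replicate_append_replicate, Nat.add_comm j,
          Nat.add_assoc]⟩
    rw [suffix_iff_eq_drop] at hone hzero
    simpa [replicate_succ] using hone.trans hzero.symm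

end ZerosOne

open ZerosOne in
theorem stmt_11_general (k : ℕ) (x : List Bool)
    (hx : x = List.replicate k false ++ [true]) (y : List Bool) :
    (∃ (bs : List ℕ) (m : ℕ), bs ≠ [] ∧ (∀ i ∈ bs, i < k) ∧ k ≤ m ∧
        y = (bs.map (fun i => List.replicate i false ++ [true])).flatten ++
              List.replicate m false) ↔
      (¬ x <:+: y ∧ ∀ z : List Bool, IsBordered y z → x <:+: z) := by
  subst hx
  constructor
  · rintro ⟨bs, m, hbs, hlt, hkm, rfl⟩
    refine ⟨not_infix_blockWord_append_replicate hlt m, fun z hz => ?_⟩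
    obtain ⟨init, i, rfl⟩ := bs.eq_nil_or_concat.resolve_left hbs
    exact infix_of_isBordered (V := blockWord init ++ replicate i false) hkm
      (by simpa [blockWord] using hz)
  · rintro ⟨hy, hbord⟩
    obtain ⟨bs, r, rfl⟩ := exists_eq_blockWord_append_replicate y
    have hlt := forall_lt_of_not_infix_blockWord_append hy
    refine ⟨bs, r, ?_, hlt, ?_, rfl⟩
    · rintro rfl
      simpa using not_infix_replicate_false _ (hbord _ (isBordered_replicate_succ false r))
    · have hocc := hbord _ (isBordered_append_cons_self _ true)
      rw [append_assoc, infix_blockWord_append_iff hlt, replicate_false_append_true_infix_iff] at hocc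
      exact hocc.resolve_right hy

theorem stmt_11 (k : ℕ) (hk : 1 ≤ k) (x : List Bool)
    (hx : x = List.replicate k false ++ [true]) (y : List Bool) :
    (∃ (bs : List ℕ) (m : ℕ), bs ≠ [] ∧ (∀ i ∈ bs, i < k) ∧ k ≤ m ∧
        y = (bs.map (fun i => List.replicate i false ++ [true])).flatten ++
              List.replicate m false) ↔
      (¬ x <:+: y ∧ ∀ z : List Bool, IsBordered y z → x <:+: z) :=
  stmt_11_general k x hx y
end

section
/- Let Σ = {0,1} and let x, y be words over Σ with |x| = n and |y| = m. Suppose x ∉ A, x is not a subword of y, and x is a subword of yty for every word t of length 3. Then for every integer k with max(1, m−n+2) ≤ k ≤ min(2m+3−n, m+2), and for all words t₁, t₂ of length 3, it is not the case that both (y t₁ y)[k..k+n−1] = x and (y t₂ y)[k+1..k+n] = x (positions are 1-based; w[i..j] denotes the factor of w from position i through position j). -/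
section Helpers

lemma getD_some {l : List Bool} {i : ℕ} (h : i < l.length) :
    l[i]? = some (l.getD i false) := by
  rw [List.getElem?_eq_getElem h, List.getD_eq_getElem l false h]

lemma tri {y t : List Bool} {m : ℕ} (hy : y.length = m) (ht : t.length = 3) (q : ℕ) :
    (y ++ t ++ y)[q]? = if q < m then y[q]?
      else if q < m + 3 then t[q - m]? else y[q - m - 3]? := by
  rw [List.getElem?_append, List.getElem?_append]
  simp only [List.length_append, hy, ht]
  split_ifs <;> first | rfl | omega | rw [Nat.sub_sub]

lemma ptwise_of_take_drop {z x : List Bool} {q n : ℕ} (hx : x.length = n)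
    (h : (z.drop q).take n = x) : ∀ i, i < n → x[i]? = z[q + i]? := by
  intro i hi
  rw [← h, List.getElem?_take, if_pos hi, List.getElem?_drop]

lemma infix_of_ptwise {x y : List Bool} {q n : ℕ} (hx : x.length = n)
    (hq : q + n ≤ y.length) (h : ∀ i, i < n → x[i]? = y[q + i]?) : x <:+: y := by
  have hxe : x = (y.drop q).take n := by
    apply List.ext_getElem?
    intro i
    by_cases hi : i < n
    · rw [h i hi, List.getElem?_take, if_pos hi, List.getElem?_drop]
    · rw [List.getElem?_eq_none (by omega : x.length ≤ i),
        List.getElem?_eq_none]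
      simp only [List.length_take]
      omega
  rw [hxe]
  exact ((List.take_prefix _ _).isInfix).trans ((List.drop_suffix _ _).isInfix)

lemma occ_extract {x z : List Bool} {n : ℕ} (hx : x.length = n) (h : x <:+: z) :
    ∃ q, q + n ≤ z.length ∧ ∀ i, i < n → x[i]? = z[q + i]? := by
  obtain ⟨u, v, huv⟩ := h
  refine ⟨u.length, ?_, ?_⟩
  · have := congrArg List.length huv
    simp only [List.length_append, hx] at this
    omega
  · intro i hi
    rw [← huv, List.append_assoc, List.getElem?_append_right (by omega),
      show u.length + i - u.length = i by omega, List.getElem?_append, if_pos (by omega)]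

lemma decode {x y t : List Bool} {n m q : ℕ} (hx : x.length = n) (hy : y.length = m)
    (ht : t.length = 3) (hq : q + n ≤ 2 * m + 3)
    (h : ∀ i, i < n → x[i]? = (y ++ t ++ y)[q + i]?) :
    ∀ i, i < n → x.getD i false =
      if q + i < m then y.getD (q + i) false
      else if q + i < m + 3 then t.getD (q + i - m) false
      else y.getD (q + i - m - 3) false := by
  intro i hi
  have h' := h i hi
  rw [tri hy ht] at h'
  rw [getD_some (by omega : i < x.length)] at h'
  split_ifs with c1 c2
  · rw [if_pos c1, getD_some (by omega : q + i < y.length)] at h'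
    exact Option.some.inj h'
  · rw [if_neg c1, if_pos c2, getD_some (by omega : q + i - m < t.length)] at h'
    exact Option.some.inj h'
  · rw [if_neg c1, if_neg c2, getD_some (by omega : q + i - m - 3 < y.length)] at h'
    exact Option.some.inj h'

lemma kill {x y t : List Bool} {n m : ℕ} (hx : x.length = n) (hy : y.length = m)
    (ht : t.length = 3) (hsub : ¬ x <:+: y) (hocc : x <:+: y ++ t ++ y)
    (H : ∀ q, m + 1 ≤ q + n → q ≤ m + 2 → q + n ≤ 2 * m + 3 →
      (∀ i, i < n → x.getD i false =
        if q + i < m then y.getD (q + i) false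
        else if q + i < m + 3 then t.getD (q + i - m) false
        else y.getD (q + i - m - 3) false) → False) : False := by
  obtain ⟨q, hqlen, hpt⟩ := occ_extract hx hocc
  rw [show (y ++ t ++ y).length = 2 * m + 3 by simp [hy, ht]; omega] at hqlen
  by_cases hL : q + n ≤ m
  · refine hsub (infix_of_ptwise (q := q) hx (by rw [hy]; omega) ?_)
    intro i hi
    rw [hpt i hi, tri hy ht, if_pos (by omega)]
  by_cases hR : m + 3 ≤ q
  · refine hsub (infix_of_ptwise (q := q - m - 3) hx (by rw [hy]; omega) ?_)
    intro i hi
    rw [hpt i hi, tri hy ht, if_neg (by omega), if_neg (by omega)]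
    congr 1
    omega
  · exact H q (by omega) (by omega) hqlen (decode hx hy ht hqlen hpt)

lemma getD3 (b : Bool) (j : ℕ) (h : j < 3) : List.getD [b, b, b] j false = b := by
  interval_cases j <;> rfl

lemma getD0 (u v w : Bool) : ([u, v, w] : List Bool).getD 0 false = u := rfl
lemma getD1 (u v w : Bool) : ([u, v, w] : List Bool).getD 1 false = v := rfl
lemma getD2 (u v w : Bool) : ([u, v, w] : List Bool).getD 2 false = w := rfl

lemma bool_ne {b c : Bool} (h : b ≠ c) : b = !c := by
  cases b <;> cases c <;> simp_all

lemma bool_ne' {b c : Bool} (h : b ≠ !c) : b = c := by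
  cases b <;> cases c <;> simp_all

lemma bool_absurd {a b : Bool} (h1 : b = a) (h2 : b = !a) : False := by
  cases a <;> simp_all

lemma list_eq_cons_replicate {x : List Bool} {n : ℕ} {a b : Bool} (hn : x.length = n)
    (hn1 : 1 ≤ n) (h0 : x.getD 0 false = a)
    (hr : ∀ i, 1 ≤ i → i < n → x.getD i false = b) :
    x = a :: List.replicate (n - 1) b := by
  apply List.ext_getElem?
  intro i
  match i with
  | 0 =>
    rw [getD_some (by omega : 0 < x.length), h0, List.getElem?_cons_zero]
  | (j+1) =>
    by_cases hj : j + 1 < n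
    · rw [getD_some (by omega : j + 1 < x.length), hr (j+1) (by omega) hj,
        List.getElem?_cons_succ, List.getElem?_replicate, if_pos (by omega : j < n - 1)]
    · rw [List.getElem?_eq_none (by omega : x.length ≤ j + 1), List.getElem?_cons_succ,
        List.getElem?_replicate, if_neg (by omega : ¬ j < n - 1)]

lemma list_eq_replicate_append {x : List Bool} {n : ℕ} {a b : Bool} (hn : x.length = n)
    (hn1 : 1 ≤ n) (hr : ∀ i, i < n - 1 → x.getD i false = a)
    (hl : x.getD (n - 1) false = b) :
    x = List.replicate (n - 1) a ++ [b] := by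
  apply List.ext_getElem?
  intro i
  by_cases hi : i < n - 1
  · rw [getD_some (by omega : i < x.length), List.getElem?_append,
      if_pos (show i < (List.replicate (n - 1) a).length by
        simp only [List.length_replicate]; omega),
      List.getElem?_replicate, if_pos hi, hr i hi]
  · by_cases hi2 : i = n - 1
    · subst hi2
      rw [getD_some (by omega : n - 1 < x.length),
        List.getElem?_append_right (by simp only [List.length_replicate]; omega)]
      simp only [List.length_replicate, Nat.sub_self, List.getElem?_cons_zero]
      rw [hl]
    · rw [List.getElem?_eq_none (by omega : x.length ≤ i), List.getElem?_eq_none]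
      simp only [List.length_append, List.length_replicate, List.length_cons, List.length_nil]
      omega

lemma run_right {X : ℕ → Bool} {lo n : ℕ}
    (h : ∀ i, lo ≤ i → i + 1 < n → X i = X (i + 1)) :
    ∀ i, lo ≤ i → i < n → X i = X lo := by
  intro i hi hin
  induction i with
  | zero => have : lo = 0 := by omega
            rw [this]
  | succ j ih =>
    rcases Nat.lt_or_ge j.succ lo with hc | hc
    · omega
    rcases Nat.eq_or_lt_of_le hc with hc2 | hc2
    · subst hc2
      rfl
    · have hj : lo ≤ j := by omega
      rw [← h j hj (by omega)]
      exact ih hj (by omega)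

end Helpers

theorem stmt_12 (x y : List Bool) (n m : ℕ) (hn : x.length = n) (hm : y.length = m)
    (hA : ¬ memA x) (hsub : ¬ x <:+: y)
    (hall : ∀ t : List Bool, t.length = 3 → x <:+: y ++ t ++ y) :
    ∀ k : ℕ, max 1 ((m : ℤ) - (n : ℤ) + 2) ≤ (k : ℤ) →
      (k : ℤ) ≤ min (2 * (m : ℤ) + 3 - (n : ℤ)) ((m : ℤ) + 2) →
      ∀ t₁ t₂ : List Bool, t₁.length = 3 → t₂.length = 3 →
        ¬ (((y ++ t₁ ++ y).drop (k - 1)).take n = x ∧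
           ((y ++ t₂ ++ y).drop k).take n = x) := by
  classical
  intro k hk1 hk2 t₁ t₂ ht1 ht2
  rintro ⟨h1, h2⟩
  have hk : 1 ≤ k := by
    have h := le_trans (le_max_left 1 ((m : ℤ) - n + 2)) hk1
    exact_mod_cast h
  have hmn : m + 2 ≤ k + n := by
    have h := le_trans (le_max_right 1 ((m : ℤ) - n + 2)) hk1
    omega
  have hkn : k + n ≤ 2 * m + 3 := by
    have h := le_trans hk2 (min_le_left (2 * (m : ℤ) + 3 - n) ((m : ℤ) + 2))
    omega
  have hkm : k ≤ m + 2 := by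
    have h := le_trans hk2 (min_le_right (2 * (m : ℤ) + 3 - n) ((m : ℤ) + 2))
    exact_mod_cast h
  set p := k - 1 with hp
  have hkp : k = p + 1 := by omega
  rw [hkp] at h2
  -- pointwise occurrence facts
  have O1 := decode hn hm ht1 (q := p) (by omega) (ptwise_of_take_drop hn h1)
  have O2 := decode hn hm ht2 (q := p + 1) (by omega) (ptwise_of_take_drop hn h2)
  -- change positions
  have CC : ∀ i, i + 1 < n → (p + 1 + i < m ∨ m + 3 ≤ p + 1 + i) →
      x.getD i false = x.getD (i + 1) false := by
    intro i hi hr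
    have e1 := O1 (i + 1) hi
    have e2 := O2 i (by omega)
    rw [show p + (i + 1) = p + 1 + i by omega] at e1
    rcases hr with hr | hr
    · rw [if_pos hr] at e1 e2
      rw [e1, e2]
    · rw [if_neg (by omega), if_neg (by omega)] at e1
      rw [if_neg (by omega), if_neg (by omega)] at e2
      rw [e1, e2]
  have hch : ∀ i, i + 1 < n → x.getD i false ≠ x.getD (i + 1) false →
      m ≤ p + 1 + i ∧ p + 1 + i ≤ m + 2 := by
    intro i h1' h2'
    rcases Nat.lt_or_ge (p + 1 + i) m with hr | hr
    · exact absurd (CC i h1' (Or.inl hr)) h2'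
    rcases Nat.lt_or_ge (p + 1 + i) (m + 3) with hr2 | hr2
    · exact ⟨hr, by omega⟩
    · exact absurd (CC i h1' (Or.inr hr2)) h2'
  -- n ≥ 1
  rcases Nat.eq_zero_or_pos n with hn0 | hn0
  · exact hsub (by rw [List.length_eq_zero_iff.mp (by omega : x.length = 0)]; exact List.nil_infix)
  obtain ⟨a, ha⟩ : ∃ a, x.getD 0 false = a := ⟨_, rfl⟩
  by_cases hconst : ∀ i, i < n → x.getD i false = a
  · -- x constant : kill with t = [!a,!a,!a]
    refine kill hn hm (t := [!a, !a, !a]) rfl hsub (hall _ rfl) ?_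
    intro q hq1 hq2 hq3 O
    by_cases hqm : q ≤ m
    · have hi : m - q < n := by omega
      have e := O (m - q) hi
      rw [if_neg (by omega), if_pos (by omega), getD3 _ _ (by omega)] at e
      exact bool_absurd (hconst _ hi) e
    · have e := O 0 (by omega)
      rw [if_neg (by omega), if_pos (by omega), getD3 _ _ (by omega)] at e
      exact bool_absurd (hconst 0 (by omega)) e
  -- x not constant: first change at α
  push_neg at hconst
  have hex : ∃ i, i < n ∧ x.getD i false ≠ a := hconst
  set α := Nat.find hex with hαdef
  obtain ⟨hαn, hαa⟩ := Nat.find_spec hex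
  rw [← hαdef] at hαn hαa
  have hL : ∀ i, i < α → x.getD i false = a := by
    intro i hi
    by_contra hc
    exact Nat.find_min hex hi ⟨by omega, hc⟩
  have hα1 : 1 ≤ α := by
    rcases Nat.eq_zero_or_pos α with h | h
    · exfalso; apply hαa; rw [h]; exact ha
    · exact h
  have hXα : x.getD α false = !a := bool_ne hαa
  have hchα : m ≤ p + α ∧ p + α ≤ m + 2 := by
    have hne1 : x.getD (α - 1) false ≠ x.getD (α - 1 + 1) false := by
      rw [show α - 1 + 1 = α by omega, hL (α - 1) (by omega)]
      exact fun hcc => hαa hcc.symm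
    have h := hch (α - 1) (by omega) hne1
    omega
  by_cases h2b : ∀ i, α ≤ i → i < n → x.getD i false = !a
  · -- two-block word a^α (!a)^(n-α)
    by_cases hA1 : α = 1
    · -- x ∈ A
      apply hA
      refine ⟨n - 1, by omega, ?_⟩
      have hx : x = a :: List.replicate (n - 1) (!a) :=
        list_eq_cons_replicate hn (by omega) ha
          (fun i h1' h2' => h2b i (by omega) h2')
      cases hab : a
      · rw [hab] at hx; simp only [Bool.not_false] at hx
        exact Or.inl hx
      · rw [hab] at hx; simp only [Bool.not_true] at hx
        exact Or.inr (Or.inl hx)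
    by_cases hAn : α = n - 1
    · apply hA
      refine ⟨n - 1, by omega, ?_⟩
      have hx : x = List.replicate (n - 1) a ++ [!a] :=
        list_eq_replicate_append hn (by omega)
          (fun i h' => hL i (by omega))
          (by rw [← hAn]; exact hXα)
      cases hab : a
      · rw [hab] at hx; simp only [Bool.not_false] at hx
        exact Or.inr (Or.inr (Or.inl hx))
      · rw [hab] at hx; simp only [Bool.not_true] at hx
        exact Or.inr (Or.inr (Or.inr hx))
    have hα2 : 2 ≤ α := by omega
    have hαn2 : α + 2 ≤ n := by omega
    by_cases hd : m + 3 ≤ p + n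
    · -- d ≥ 1 : t = [a, !a, a]
      have hi0 : m + 2 - p < n := by omega
      have e0 := O2 (m + 2 - p) hi0
      rw [if_neg (by omega), if_neg (by omega),
        show p + 1 + (m + 2 - p) - m - 3 = 0 by omega] at e0
      have HY0 : y.getD 0 false = !a := by
        rw [← e0]; exact h2b _ (by omega) hi0
      refine kill hn hm (t := [a, !a, a]) rfl hsub (hall _ rfl) ?_
      intro q hq1 hq2 hq3 O
      by_cases hq4 : q ≤ m
      · by_cases hc1 : α ≤ m - q
        · have hi : m - q < n := by omega
          have e := O (m - q) hi
          rw [if_neg (by omega), if_pos (by omega),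
            show q + (m - q) - m = 0 by omega, getD0] at e
          exact bool_absurd e (h2b _ (by omega) hi)
        · by_cases hc2 : m - q = α - 1
          · have e := O (α + 1) (by omega)
            rw [if_neg (by omega), if_pos (by omega),
              show q + (α + 1) - m = 2 by omega, getD2] at e
            exact bool_absurd e (h2b _ (by omega) (by omega))
          · have e := O (m - q + 1) (by omega)
            rw [if_neg (by omega), if_pos (by omega),
              show q + (m - q + 1) - m = 1 by omega, getD1] at e
            exact bool_absurd (hL _ (by omega)) e
      · by_cases hc : q = m + 1
        · have e := O 0 (by omega)
          rw [if_neg (by omega), if_pos (by omega),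
            show q + 0 - m = 1 by omega, getD1] at e
          exact bool_absurd ha e
        · have e := O 1 (by omega)
          rw [if_neg (by omega), if_neg (by omega),
            show q + 1 - m - 3 = 0 by omega, HY0] at e
          exact bool_absurd (hL 1 (by omega)) e
    · -- d = 0 : n = α + 2, p + α = m, t = [!a, a, !a]
      have hpα : p + α = m := by omega
      have hnα : n = α + 2 := by omega
      refine kill hn hm (t := [!a, a, !a]) rfl hsub (hall _ rfl) ?_
      intro q hq1 hq2 hq3 O
      by_cases hc1 : q + 1 = p
      · have e := O α (by omega)
        rw [if_pos (by omega)] at e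
        have e2 := O1 (α - 1) (by omega)
        rw [if_pos (by omega)] at e2
        rw [show q + α = p + (α - 1) by omega, ← e2] at e
        exact bool_absurd (e.trans (hL (α - 1) (by omega))) hXα
      by_cases hc2 : q = p
      · have e := O (α + 1) (by omega)
        rw [if_neg (by omega), if_pos (by omega),
          show q + (α + 1) - m = 1 by omega, getD1] at e
        exact bool_absurd e (h2b _ (by omega) (by omega))
      by_cases hc3 : q = p + 1
      · have e := O (α - 1) (by omega)
        rw [if_neg (by omega), if_pos (by omega),
          show q + (α - 1) - m = 0 by omega, getD0] at e
        exact bool_absurd (hL _ (by omega)) e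
      by_cases hc4 : q ≤ m
      · have e := O (m - q) (by omega)
        rw [if_neg (by omega), if_pos (by omega),
          show q + (m - q) - m = 0 by omega, getD0] at e
        exact bool_absurd (hL _ (by omega)) e
      by_cases hc5 : q = m + 1
      · have e := O 1 (by omega)
        rw [if_neg (by omega), if_pos (by omega),
          show q + 1 - m = 2 by omega, getD2] at e
        exact bool_absurd (hL 1 (by omega)) e
      · have e := O 0 (by omega)
        rw [if_neg (by omega), if_pos (by omega),
          show q + 0 - m = 2 by omega, getD2] at e
        exact bool_absurd ha e
  -- at least three blocks
  push_neg at h2b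
  obtain ⟨i1, hi1a, hi1n, hi1⟩ := h2b
  have hexδ : ∃ i, α ≤ i ∧ i < n ∧ x.getD i false = a := ⟨i1, hi1a, hi1n, bool_ne' hi1⟩
  set δ := Nat.find hexδ with hδdef
  obtain ⟨hδα, hδn, hXδ⟩ := Nat.find_spec hexδ
  rw [← hδdef] at hδα hδn hXδ
  have hM : ∀ i, α ≤ i → i < δ → x.getD i false = !a := by
    intro i h1' h2'
    have hmin := Nat.find_min hexδ h2'
    have hin : i < n := by omega
    by_contra hc
    exact hmin ⟨h1', hin, bool_ne' hc⟩
  have hδgt : α < δ := by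
    rcases Nat.lt_or_ge α δ with h | h
    · exact h
    · exfalso
      have hδα' : δ = α := by omega
      rw [hδα'] at hXδ
      exact bool_absurd hXδ hXα
  have hchδ : m ≤ p + δ ∧ p + δ ≤ m + 2 := by
    have hneδ : x.getD (δ - 1) false ≠ x.getD (δ - 1 + 1) false := by
      rw [show δ - 1 + 1 = δ by omega, hM (δ - 1) (by omega) (by omega), hXδ]
      intro hcc
      exact bool_absurd rfl hcc.symm
    have h := hch (δ - 1) (by omega) hneδ
    omega
  by_cases h3b : ∀ i, δ ≤ i → i < n → x.getD i false = a
  · -- three-block word : t = [!a,!a,!a]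
    refine kill hn hm (t := [!a, !a, !a]) rfl hsub (hall _ rfl) ?_
    intro q hq1 hq2 hq3 O
    by_cases hqm : m + 1 ≤ q
    · have e := O 0 (by omega)
      rw [if_neg (by omega), if_pos (by omega), getD3 _ _ (by omega)] at e
      exact bool_absurd ha e
    · by_cases hc1 : m - q < α
      · have e := O (m - q) (by omega)
        rw [if_neg (by omega), if_pos (by omega), getD3 _ _ (by omega)] at e
        exact bool_absurd (hL _ hc1) e
      · by_cases hc2 : δ ≤ m - q
        · have e := O (m - q) (by omega)
          rw [if_neg (by omega), if_pos (by omega), getD3 _ _ (by omega)] at e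
          exact bool_absurd (h3b _ hc2 (by omega)) e
        · have e := O δ (by omega)
          rw [if_neg (by omega), if_pos (by omega), getD3 _ _ (by omega)] at e
          exact bool_absurd hXδ e
  -- four blocks : x = a^α !a a (!a)^(n-α-2), p + α = m
  push_neg at h3b
  obtain ⟨i2, hi2a, hi2n, hi2⟩ := h3b
  have hexε : ∃ i, δ ≤ i ∧ i < n ∧ x.getD i false = !a := ⟨i2, hi2a, hi2n, bool_ne hi2⟩
  set ε := Nat.find hexε with hεdef
  obtain ⟨hεδ, hεn, hXε⟩ := Nat.find_spec hexε
  rw [← hεdef] at hεδ hεn hXε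
  have hεgt : δ < ε := by
    rcases Nat.lt_or_ge δ ε with h | h
    · exact h
    · exfalso
      have hεδ' : ε = δ := by omega
      rw [hεδ'] at hXε
      exact bool_absurd hXδ hXε
  have hchε : m ≤ p + ε ∧ p + ε ≤ m + 2 := by
    have hM2 : x.getD (ε - 1) false = a := by
      by_contra hc
      exact Nat.find_min hexε (by omega : ε - 1 < ε) ⟨by omega, by omega, bool_ne hc⟩
    have hneε : x.getD (ε - 1) false ≠ x.getD (ε - 1 + 1) false := by
      rw [show ε - 1 + 1 = ε by omega, hM2, hXε]
      intro hcc
      exact bool_absurd rfl hcc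
    have h := hch (ε - 1) (by omega) hneε
    omega
  have hpα : p + α = m := by omega
  have hδα' : δ = α + 1 := by omega
  have hεα : ε = α + 2 := by omega
  have hXδa : x.getD (α + 1) false = a := by rw [← hδα']; exact hXδ
  have hXεa : x.getD (α + 2) false = !a := by rw [← hεα]; exact hXε
  have hR : ∀ i, α + 2 ≤ i → i < n → x.getD i false = !a := by
    intro i h1' h2'
    have hrun : x.getD i false = x.getD (α + 2) false :=
      run_right (X := fun j => x.getD j false) (lo := α + 2) (n := n)
        (fun j hj1 hj2 => CC j hj2 (Or.inr (by omega))) i h1' h2'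
    rw [hrun, hXεa]
  have hY0 : y.getD 0 false = !a := by
    have e := O2 (α + 2) (by omega)
    rw [if_neg (by omega), if_neg (by omega),
      show p + 1 + (α + 2) - m - 3 = 0 by omega] at e
    rw [← e]
    exact hXεa
  refine kill hn hm (t := [a, a, !a]) rfl hsub (hall _ rfl) ?_
  intro q hq1 hq2 hq3 O
  by_cases hc1 : q + 2 ≤ p
  · have e := O (m - q) (by omega)
    rw [if_neg (by omega), if_pos (by omega),
      show q + (m - q) - m = 0 by omega, getD0] at e
    exact bool_absurd e (hR _ (by omega) (by omega))
  by_cases hc2 : q + 1 = p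
  · have e := O (α + 2) (by omega)
    rw [if_neg (by omega), if_pos (by omega),
      show q + (α + 2) - m = 1 by omega, getD1] at e
    exact bool_absurd e (hR _ le_rfl (by omega))
  by_cases hc3 : q = p
  · have e := O α (by omega)
    rw [if_neg (by omega), if_pos (by omega),
      show q + α - m = 0 by omega, getD0] at e
    exact bool_absurd e hXα
  by_cases hc4 : q = p + 1
  · have e := O α (by omega)
    rw [if_neg (by omega), if_pos (by omega),
      show q + α - m = 1 by omega, getD1] at e
    exact bool_absurd e hXα
  by_cases hc5 : q = p + 2
  · have e := O (α + 1) (by omega)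
    rw [if_neg (by omega), if_neg (by omega),
      show q + (α + 1) - m - 3 = 0 by omega, hY0] at e
    exact bool_absurd hXδa e
  · have e := O (m + 2 - q) (by omega)
    rw [if_neg (by omega), if_pos (by omega),
      show q + (m + 2 - q) - m = 2 by omega, getD2] at e
    exact bool_absurd (hL _ (by omega)) e
end

section
/- Let Σ = {0,1} and let x, y be words over Σ with |x| = n and |y| = m. Suppose x ∉ A, x is not a subword of y, and x is a subword of yty for every word t of length 3. Then for all words t₁, t₂ of length 3, it is not the case that both (y t₁ y)[m+1..m+n] = x and (y t₂ y)[m+3..m+n+2] = x (positions are 1-based; w[i..j] denotes the factor of w from position i through position j). -/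
lemma bool_ne_s13 {p q : Bool} (h : p ≠ q) : p = !q := by revert h; revert p q; decide

lemma getD_pointwise_infix {x y : List Bool} {k n : ℕ} (hn : x.length = n)
    (hkn : k + n ≤ y.length)
    (h : ∀ i < n, x.getD i false = y.getD (k + i) false) : x <:+: y := by
  have hx : x = (y.drop k).take n := by
    apply List.ext_getElem
    · simp [hn]; omega
    · intro i h1 h2
      have hi : i < n := by simpa [hn] using h1
      have h3 := h i hi
      rw [List.getD_eq_getElem _ _ (by omega), List.getD_eq_getElem _ _ (by omega)] at h3
      rw [List.getElem_take, List.getElem_drop]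
      exact h3
  rw [hx]
  exact ((List.take_prefix _ _).isInfix).trans ((List.drop_suffix _ _).isInfix)

lemma infix_pointwise {x z : List Bool} (h : x <:+: z) :
    ∃ k, k + x.length ≤ z.length ∧ ∀ i < x.length, x.getD i false = z.getD (k + i) false := by
  obtain ⟨s, u, hz⟩ := h
  refine ⟨s.length, by rw [← hz]; simp, fun i hi => ?_⟩
  rw [← hz, List.append_assoc, List.getD_append_right _ _ _ _ (by omega)]
  have : s.length + i - s.length = i := by omega
  rw [this, List.getD_append _ _ _ _ (by omega)]

lemma gA {y t : List Bool} {m : ℕ} (hm : y.length = m) {j : ℕ} (hj : j < m) :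
    (y ++ t ++ y).getD j false = y.getD j false := by
  rw [List.append_assoc, List.getD_append _ _ _ _ (by omega)]

lemma gB {y t : List Bool} {m : ℕ} (hm : y.length = m) {j : ℕ} (hj1 : m ≤ j) (hj2 : j < m + t.length) :
    (y ++ t ++ y).getD j false = t.getD (j - m) false := by
  rw [List.append_assoc, List.getD_append_right _ _ _ _ (by omega), hm]
  exact List.getD_append _ _ _ _ (by omega)

lemma gC {y t : List Bool} {m : ℕ} (hm : y.length = m) (ht : t.length = 3) {j : ℕ} (hj1 : m + 3 ≤ j) :
    (y ++ t ++ y).getD j false = y.getD (j - m - 3) false := by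
  rw [List.append_assoc, List.getD_append_right _ _ _ _ (by omega),
    List.getD_append_right _ _ _ _ (by omega ), hm, ht]

lemma cross {x y t : List Bool} {n m : ℕ} (hn : x.length = n) (hm : y.length = m)
    (hsub : ¬ x <:+: y) (hocc : x <:+: y ++ t ++ y) (ht : t.length = 3) :
    ∃ k, m < k + n ∧ k ≤ m + 2 ∧ k + n ≤ 2 * m + 3 ∧
      (∀ i < n, k + i < m → x.getD i false = y.getD (k + i) false) ∧
      (∀ i < n, m ≤ k + i → k + i < m + 3 → x.getD i false = t.getD (k + i - m) false) ∧
      (∀ i < n, m + 3 ≤ k + i → x.getD i false = y.getD (k + i - m - 3) false) := by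
  obtain ⟨k, hk, hpt⟩ := infix_pointwise hocc
  rw [hn] at hpt
  have hlen : (y ++ t ++ y).length = 2 * m + 3 := by simp [hm, ht]; omega
  rw [hn, hlen] at hk
  by_cases h1 : k + n ≤ m
  · exact absurd (getD_pointwise_infix (k := k) hn (by omega)
      (fun i hi => by rw [hpt i hi, gA hm (by omega)])) hsub
  by_cases h2 : m + 3 ≤ k
  · refine absurd (getD_pointwise_infix (k := k - m - 3) hn (by omega)
      (fun i hi => ?_)) hsub
    rw [hpt i hi, gC hm ht (by omega)]
    congr 2
    omega
  refine ⟨k, by omega, by omega, hk, fun i hi hlt => ?_, fun i hi hge hlt => ?_,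
    fun i hi hge => ?_⟩
  · rw [hpt i hi, gA hm hlt]
  · rw [hpt i hi, gB hm hge (by omega)]
  · rw [hpt i hi, gC hm ht hge]


theorem stmt_13 (x y : List Bool) (n m : ℕ) (hn : x.length = n) (hm : y.length = m)
    (hA : ¬ memA x) (hsub : ¬ x <:+: y)
    (hall : ∀ t : List Bool, t.length = 3 → x <:+: y ++ t ++ y) :
    ∀ t₁ t₂ : List Bool, t₁.length = 3 → t₂.length = 3 →
      ¬ (((y ++ t₁ ++ y).drop m).take n = x ∧
         ((y ++ t₂ ++ y).drop (m + 2)).take n = x) := by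
  intro t₁ t₂ ht₁ ht₂
  rintro ⟨h1, h2⟩
  have hn1 : 1 ≤ n := by
    rcases Nat.eq_zero_or_pos n with h | h
    · exact absurd (by rw [List.length_eq_zero_iff.mp (by omega : x.length = 0)]; exact List.nil_infix) hsub
    · exact h
  have hlen2 : (y ++ t₂ ++ y).length = 2 * m + 3 := by simp [hm, ht₂]; omega
  have hlen1 : (y ++ t₁ ++ y).length = 2 * m + 3 := by simp [hm, ht₁]; omega
  have hnm : n ≤ m + 1 := by
    have := congrArg List.length h2
    simp [hlen2, hn] at this
    omega
  have hX2 : ∀ i < n, x.getD i false = (y ++ t₂ ++ y).getD (m + 2 + i) false := by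
    intro i hi
    rw [← h2, List.getD_eq_getElem _ _ (by rw [← h2] at hn; omega),
      List.getD_eq_getElem _ _ (by rw [hlen2]; omega), List.getElem_take, List.getElem_drop]
  have hX1 : ∀ i < n, x.getD i false = (y ++ t₁ ++ y).getD (m + i) false := by
    intro i hi
    rw [← h1, List.getD_eq_getElem _ _ (by rw [← h1] at hn; omega),
      List.getD_eq_getElem _ _ (by rw [hlen1]; omega), List.getElem_take, List.getElem_drop]
  have F2 : ∀ i, 1 ≤ i → i < n → x.getD i false = y.getD (i - 1) false := by
    intro i h1i h2i
    rw [hX2 i h2i, gC hm ht₂ (by omega), show m + 2 + i - m - 3 = i - 1 from by omega]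
  have hper : ∀ i, 3 ≤ i → i < n → x.getD i false = x.getD (i - 2) false := by
    intro i h1i h2i
    rw [hX1 i h2i, gC hm ht₁ (by omega), show m + i - m - 3 = i - 2 - 1 from by omega,
      ← F2 (i - 2) (by omega) (by omega)]
  have F3 : ∀ i, 1 ≤ i → i < n →
      x.getD i false = if i % 2 = 1 then x.getD 1 false else x.getD 2 false := by
    intro i
    induction i using Nat.strong_induction_on with
    | _ i IH =>
      intro h1i h2i
      match i, h1i with
      | 1, _ => simp
      | 2, _ => simp
      | (j+3), _ =>
        rw [hper (j+3) (by omega) h2i, show j + 3 - 2 = j + 1 from by omega,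
          IH (j+1) (by omega) (by omega) (by omega), show (j+1) % 2 = (j+3) % 2 from by omega]
  -- notation: c = X 0, a = X 1, b = X 2, l = X (n-1)
  by_cases htc0 : ∀ i < n, x.getD i false = x.getD 0 false
  · -- x is constant; use t = [!c,!c,!c]
    obtain ⟨k, hk1, hk2, hk3, Hh, Ht, Htl⟩ :=
      cross hn hm hsub (hall [!(x.getD 0 false), !(x.getD 0 false), !(x.getD 0 false)] rfl) rfl
    by_cases hkm : k ≤ m
    · have e := Ht (m - k) (by omega) (by omega) (by omega)
      rw [htc0 (m - k) (by omega), show k + (m - k) - m = 0 from by omega] at e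
      simp at e
    · have e := Ht 0 hn1 (by omega) (by omega)
      rcases (by omega : k + 0 - m = 1 ∨ k + 0 - m = 2) with h | h <;> rw [h] at e <;> simp at e
  push_neg at htc0
  obtain ⟨i1, hi1n, hi1⟩ := htc0
  have hi11 : 1 ≤ i1 := by
    rcases i1 with _ | j
    · exact absurd rfl hi1
    · omega
  have hn2 : 2 ≤ n := by omega
  by_cases htc1 : ∀ i, 1 ≤ i → i < n → x.getD i false = x.getD 1 false
  · -- tail constant a, and c ≠ a : memA
    have hca : x.getD 0 false ≠ x.getD 1 false := by
      intro h; exact hi1 (by rw [htc1 i1 hi11 hi1n, h])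
    have hxeq : x = x.getD 0 false :: List.replicate (n - 1) (x.getD 1 false) := by
      apply List.ext_getElem
      · simp [hn]; omega
      · intro i hia hib
        rcases i with _ | j
        · simp [← List.getD_eq_getElem x false]
        · have hj : j + 1 < n := by rw [hn] at hia; omega
          have e := htc1 (j+1) (by omega) hj
          rw [List.getD_eq_getElem _ _ (by omega)] at e
          simpa using e
    refine hA ⟨n - 1, by omega, ?_⟩
    have hc2 := bool_ne_s13 hca
    cases hav : x.getD 1 false with
    | false => right; left; rw [hxeq, hav, hc2, hav]; simp
    | true => left; rw [hxeq, hav, hc2, hav]; simp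
  push_neg at htc1
  obtain ⟨i2, h2a, h2b, h2c⟩ := htc1
  have hn3 : 3 ≤ n := by
    rcases (by omega : i2 = 1 ∨ 2 ≤ i2) with h | h
    · rw [h] at h2c; exact absurd rfl h2c
    · omega
  have hba : x.getD 2 false ≠ x.getD 1 false := by
    intro h
    apply h2c
    rw [F3 i2 h2a h2b]
    split
    · rfl
    · exact h
  have pc : ∀ d, 1 ≤ d → d + 1 < n → x.getD d false = x.getD (d+1) false → False := by
    intro d hd1 hd2 he
    rw [F3 d hd1 (by omega), F3 (d+1) (by omega) hd2] at he
    rcases Nat.mod_two_eq_zero_or_one d with h | h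
    · rw [h, show (d+1) % 2 = 1 from by omega, if_neg (by omega), if_pos rfl] at he
      exact hba he
    · rw [h, show (d+1) % 2 = 0 from by omega, if_pos rfl, if_neg (by omega)] at he
      exact hba he.symm
  by_cases hcl : x.getD 0 false = x.getD (n-1) false
  · -- B1 : t = [!c,!c,!c]
    obtain ⟨k, hk1, hk2, hk3, Hh, Ht, Htl⟩ :=
      cross hn hm hsub (hall [!(x.getD 0 false), !(x.getD 0 false), !(x.getD 0 false)] rfl) rfl
    by_cases hkm : k ≤ m
    · have e := Ht (m - k) (by omega) (by omega) (by omega)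
      rw [show k + (m - k) - m = 0 from by omega] at e
      rcases (by omega : m - k = 0 ∨ (1 ≤ m - k ∧ m - k + 1 < n) ∨ m - k = n - 1) with h | ⟨ha', hb'⟩ | h
      · rw [h] at e; simp at e
      · have e2 := Ht (m - k + 1) (by omega) (by omega) (by omega)
        rw [show k + (m - k + 1) - m = 1 from by omega] at e2
        exact pc _ ha' hb' (by rw [e, e2]; simp)
      · rw [h, ← hcl] at e; simp at e
    · have e := Ht 0 hn1 (by omega) (by omega)
      rcases (by omega : k + 0 - m = 1 ∨ k + 0 - m = 2) with h | h <;> rw [h] at e <;> simp at e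
  by_cases hcb : x.getD 0 false = x.getD 2 false
  · -- B2 : c = b, l = a, t = [c,c,!c]
    obtain ⟨k, hk1, hk2, hk3, Hh, Ht, Htl⟩ :=
      cross hn hm hsub (hall [x.getD 0 false, x.getD 0 false, !(x.getD 0 false)] rfl) rfl
    by_cases hkm : k ≤ m
    · have e := Ht (m - k) (by omega) (by omega) (by omega)
      rw [show k + (m - k) - m = 0 from by omega] at e
      rcases (by omega : m - k = 0 ∨ (1 ≤ m - k ∧ m - k + 1 < n) ∨ m - k = n - 1) with h | ⟨ha', hb'⟩ | h
      · have e2 := Ht 1 (by omega) (by omega) (by omega)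
        rw [show k + 1 - m = 1 from by omega] at e2
        simp only [List.getD_cons_zero, List.getD_cons_succ] at e2
        exact hba (hcb.symm.trans e2.symm)
      · have e2 := Ht (m - k + 1) (by omega) (by omega) (by omega)
        rw [show k + (m - k + 1) - m = 1 from by omega] at e2
        exact pc _ ha' hb' (by rw [e, e2]; simp)
      · rw [h] at e
        simp only [List.getD_cons_zero] at e
        exact hcl e.symm
    · rcases (by omega : k = m + 1 ∨ k = m + 2) with h | h
      · have e3 := Htl 2 (by omega) (by omega)
        rw [show k + 2 - m - 3 = 0 from by omega] at e3
        have e4 := F2 1 (by omega) (by omega)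
        rw [show (1:ℕ) - 1 = 0 from rfl] at e4
        exact hba (e3.trans e4.symm)
      · have e := Ht 0 hn1 (by omega) (by omega)
        rw [show k + 0 - m = 2 from by omega] at e
        simp at e
  -- B3 : c = a, l = b
  have hca' : x.getD 0 false = x.getD 1 false := by
    rw [bool_ne_s13 hcb, bool_ne_s13 hba, Bool.not_not]
  have hl : x.getD (n-1) false = x.getD 2 false := by
    rw [bool_ne_s13 (Ne.symm hcl), hca', bool_ne_s13 hba]
  by_cases hn3' : n = 3
  · -- memA : x = [c,c,!c]
    have hxeq : x = [x.getD 0 false, x.getD 0 false, !(x.getD 0 false)] := by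
      apply List.ext_getElem
      · simp [hn, hn3']
      · intro i hia hib
        rw [hn, hn3'] at hia
        have hia' : i < x.length := by omega
        rw [← List.getD_eq_getElem x false hia']
        interval_cases i
        · simp only [List.getElem_cons_zero]
        · simp only [List.getElem_cons_succ, List.getElem_cons_zero]
          exact hca'.symm
        · simp only [List.getElem_cons_succ, List.getElem_cons_zero]
          exact bool_ne_s13 (Ne.symm hcb)
    refine hA ⟨2, by omega, ?_⟩
    cases hcv : x.getD 0 false with
    | false => right; right; left; rw [hxeq, hcv]; decide
    | true => right; right; right; rw [hxeq, hcv]; decide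
  have hpar : (n - 1) % 2 = 0 := by
    rcases Nat.mod_two_eq_zero_or_one (n-1) with h | h
    · exact h
    · have e := F3 (n-1) (by omega) (by omega)
      rw [h, if_pos rfl] at e
      exact absurd (hl.symm.trans e) hba
  have hn5 : 5 ≤ n := by omega
  -- stage 1 : t = [!c,!c,!c] ( = [b,b,b] )
  obtain ⟨k, hk1, hk2, hk3, Hh, Ht, Htl⟩ :=
    cross hn hm hsub (hall [!(x.getD 0 false), !(x.getD 0 false), !(x.getD 0 false)] rfl) rfl
  have hkval : k + (n - 1) = m := by
    by_cases hkm : k ≤ m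
    · have e := Ht (m - k) (by omega) (by omega) (by omega)
      rw [show k + (m - k) - m = 0 from by omega] at e
      rcases (by omega : m - k = 0 ∨ (1 ≤ m - k ∧ m - k + 1 < n) ∨ m - k = n - 1) with h | ⟨ha', hb'⟩ | h
      · rw [h] at e; simp at e
      · have e2 := Ht (m - k + 1) (by omega) (by omega) (by omega)
        rw [show k + (m - k + 1) - m = 1 from by omega] at e2
        exact absurd (by rw [e, e2]; simp) (fun q => pc _ ha' hb' q)
      · omega
    · have e := Ht 0 hn1 (by omega) (by omega)
      rcases (by omega : k + 0 - m = 1 ∨ k + 0 - m = 2) with h | h <;> rw [h] at e <;> simp at e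
  have S : ∀ i, i < n - 1 → x.getD i false = y.getD (k + i) false :=
    fun i hi => Hh i (by omega) (by omega)
  -- stage 2 : t = [c,!c,!c] ( = [a,b,b] )
  obtain ⟨k', hk1', hk2', hk3', Hh', Ht', Htl'⟩ :=
    cross hn hm hsub (hall [x.getD 0 false, !(x.getD 0 false), !(x.getD 0 false)] rfl) rfl
  by_cases hkm' : k' ≤ m
  · rcases (by omega : m - k' = 0 ∨ (1 ≤ m - k' ∧ m - k' + 2 < n) ∨ m - k' = n - 2 ∨ m - k' = n - 1)
      with h | ⟨ha', hb'⟩ | h | h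
    · have e := Ht' 1 (by omega) (by omega) (by omega)
      rw [show k' + 1 - m = 1 from by omega] at e
      simp only [List.getD_cons_zero, List.getD_cons_succ] at e
      rw [← hca'] at e
      simp at e
    · have e2 := Ht' (m - k' + 1) (by omega) (by omega) (by omega)
      rw [show k' + (m - k' + 1) - m = 1 from by omega] at e2
      have e3 := Ht' (m - k' + 2) (by omega) (by omega) (by omega)
      rw [show k' + (m - k' + 2) - m = 2 from by omega] at e3
      exact pc (m - k' + 1) (by omega) (by omega) (by rw [e2, e3]; simp)
    · have e1 := Hh' 1 (by omega) (by omega)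
      rw [show k' + 1 = k + 2 from by omega] at e1
      have e2 := S 2 (by omega)
      exact hba (e2.trans e1.symm)
    · have e := Ht' (n - 1) (by omega) (by omega) (by omega)
      rw [show k' + (n - 1) - m = 0 from by omega] at e
      simp only [List.getD_cons_zero] at e
      exact hcl e.symm
  · have e := Ht' 0 hn1 (by omega) (by omega)
    rcases (by omega : k' + 0 - m = 1 ∨ k' + 0 - m = 2) with h | h <;> rw [h] at e <;> simp at e
end

section
/- Let Σ be a finite alphabet and let x, y be nonempty words over Σ. The language L_{x=y} = {z ∈ Σ* : |z|_x = |z|_y} is finite if and only if |Σ| = 1 and x ≠ y. -/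
/-!
Over a one-letter alphabet, `x = a^p` and `y = a^q` with `p ≠ q`, and `a^n` contains them
`n + 1 - p` and `n + 1 - q` times, which agree only when `n < max p q`. Otherwise the language is
infinite. If `x = y` it is everything. If some letter `c` is such that neither `x` nor `y` is a
power of `c`, it contains every `c^n`, with no occurrences of either. The remaining case is
`x = a^p`, `y = b^q` with `a ≠ b`, and then `a^(n+p) b^(n+q)` contains each exactly `n + 1` times.
-/

open List

section OccCount

variable {α : Type*}

theorem replicate_prefix_replicate_append_iff {a : α} {w : List α} (hw : ¬ [a] <+: w)
    {p m : ℕ} : replicate p a <+: replicate m a ++ w ↔ p ≤ m := by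
  constructor
  · intro h
    by_contra! hmp
    obtain ⟨k, hk⟩ : ∃ k, p = m + (k + 1) := ⟨p - m - 1, by omega⟩
    rw [hk, replicate_add, prefix_append_right_inj, replicate_succ] at h
    exact hw ((prefix_append [a] _).trans h)
  · intro h
    rw [show m = p + (m - p) by omega, replicate_add, append_assoc]
    exact prefix_append _ _

variable [DecidableEq α]

theorem occCount_nil_right {x : List α} (hx : x ≠ []) : occCount x [] = 0 := by
  simp [occCount, hx]

theorem occCount_cons (x : List α) (c : α) (z : List α) :
    occCount x (c :: z) = occCount x z + if x <+: c :: z then 1 else 0 := by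
  simp only [occCount, length_cons, range_succ_eq_map, filter_cons, drop_zero, filter_map,
    Function.comp_def, Nat.succ_eq_add_one, drop_succ_cons, decide_eq_true_eq]
  split_ifs <;> simp

theorem occCount_eq_zero_of_not_infix {x z : List α} (h : ¬ x <:+: z) : occCount x z = 0 := by
  simp only [occCount, length_eq_zero_iff, filter_eq_nil_iff, decide_eq_true_eq]
  exact fun i _ hi => h (hi.isInfix.trans (drop_suffix i z).isInfix)

theorem occCount_replicate_eq_zero {x : List α} {c : α} (h : ∃ d ∈ x, d ≠ c) (n : ℕ) :
    occCount x (replicate n c) = 0 :=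
  occCount_eq_zero_of_not_infix fun hx =>
    let ⟨_, hd, hdc⟩ := h
    hdc (eq_of_mem_replicate (hx.subset hd))

variable {a b : α}

theorem occCount_replicate_append {w : List α} (hw : ¬ [a] <+: w) {p : ℕ} (hp : 0 < p)
    (m : ℕ) :
    occCount (replicate p a) (replicate m a ++ w) = m + 1 - p + occCount (replicate p a) w := by
  induction m with
  | zero =>
    simp only [replicate_zero, nil_append]
    omega
  | succ m ih =>
    rw [replicate_succ, cons_append, occCount_cons, ← cons_append, ← replicate_succ, ih]
    simp only [replicate_prefix_replicate_append_iff hw]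
    split_ifs <;> omega

theorem occCount_replicate_append_of_ne (hab : a ≠ b) {q : ℕ} (hq : 0 < q) (m : ℕ)
    (w : List α) :
    occCount (replicate q b) (replicate m a ++ w) = occCount (replicate q b) w := by
  induction m with
  | zero => rfl
  | succ m ih =>
    have hb : ¬ replicate q b <+: a :: (replicate m a ++ w) := by
      obtain ⟨k, rfl⟩ := Nat.exists_eq_add_one_of_ne_zero hq.ne'
      exact fun h => hab (cons_prefix_cons.1 h).1.symm
    rw [replicate_succ, cons_append, occCount_cons, ih, if_neg hb, add_zero]

theorem occCount_replicate_replicate {p : ℕ} (hp : 0 < p) (n : ℕ) :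
    occCount (replicate p a) (replicate n a) = n + 1 - p := by
  have hne : replicate p a ≠ [] := by simpa using hp.ne'
  simpa [occCount_nil_right hne] using occCount_replicate_append (a := a) (w := []) (by simp) hp n

theorem occCount_replicate_left_replicate_append_replicate (hab : a ≠ b) {p : ℕ} (hp : 0 < p)
    (m n : ℕ) : occCount (replicate p a) (replicate m a ++ replicate n b) = m + 1 - p := by
  have hw : ¬ [a] <+: replicate n b := fun h =>
    hab (eq_of_mem_replicate (h.subset (mem_singleton_self a)))
  have hab' : ∃ d ∈ replicate p a, d ≠ b := ⟨a, mem_replicate.2 ⟨hp.ne', rfl⟩, hab⟩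
  rw [occCount_replicate_append hw hp, occCount_replicate_eq_zero hab', add_zero]

theorem occCount_replicate_right_replicate_append_replicate (hab : a ≠ b) {q : ℕ} (hq : 0 < q)
    (m n : ℕ) : occCount (replicate q b) (replicate m a ++ replicate n b) = n + 1 - q := by
  rw [occCount_replicate_append_of_ne hab hq, occCount_replicate_replicate hq]

theorem setOf_occCount_eq_self_infinite [Nonempty α] (x : List α) :
    {z : List α | occCount x z = occCount x z}.Infinite := by
  simpa using Set.infinite_univ (α := List α)

theorem setOf_occCount_eq_infinite_of_exists_ne {x y : List α} {c : α} (hx : ∃ d ∈ x, d ≠ c)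
    (hy : ∃ d ∈ y, d ≠ c) : {z | occCount x z = occCount y z}.Infinite :=
  Set.infinite_of_injective_forall_mem (f := fun n : ℕ => replicate n c)
    (replicate_left_injective c) fun n => by
      rw [Set.mem_ofPred, occCount_replicate_eq_zero hx, occCount_replicate_eq_zero hy]

theorem setOf_occCount_replicate_eq_infinite (hab : a ≠ b) {p q : ℕ} (hp : 0 < p)
    (hq : 0 < q) : {z | occCount (replicate p a) z = occCount (replicate q b) z}.Infinite := by
  refine Set.infinite_of_injective_forall_mem
    (f := fun n : ℕ => replicate (n + p) a ++ replicate (n + q) b) (fun m n h => ?_) fun n => ?_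
  · have := congrArg length h
    simp only [length_append, length_replicate] at this
    omega
  · rw [Set.mem_ofPred, occCount_replicate_left_replicate_append_replicate hab hp,
      occCount_replicate_right_replicate_append_replicate hab hq]
    omega

omit [DecidableEq α] in
theorem exists_ne_or_forall_eq_forall_eq [Nontrivial α] {x y : List α} (hx : x ≠ [])
    (hy : y ≠ []) :
    (∃ c, (∃ d ∈ x, d ≠ c) ∧ ∃ d ∈ y, d ≠ c) ∨
      ∃ a b, a ≠ b ∧ (∀ d ∈ x, d = a) ∧ ∀ d ∈ y, d = b := by
  obtain ⟨a, b, hab⟩ := exists_pair_ne α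
  by_cases hxa : ∀ d ∈ x, d = a
  · by_cases hyb : ∀ d ∈ y, d = b
    · exact .inr ⟨a, b, hab, hxa, hyb⟩
    · push Not at hyb
      exact .inl ⟨b, ⟨_, head_mem hx, (hxa _ (head_mem hx)).trans_ne hab⟩, hyb⟩
  · by_cases hya : ∀ d ∈ y, d = a
    · by_cases hxb : ∀ d ∈ x, d = b
      · exact .inr ⟨b, a, hab.symm, hxb, hya⟩
      · push Not at hxb
        exact .inl ⟨b, hxb, _, head_mem hy, (hya _ (head_mem hy)).trans_ne hab⟩
    · push Not at hxa hya
      exact .inl ⟨a, hxa, hya⟩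

theorem setOf_occCount_eq_infinite [Nontrivial α] {x y : List α} (hx : x ≠ []) (hy : y ≠ []) :
    {z | occCount x z = occCount y z}.Infinite := by
  obtain ⟨c, hxc, hyc⟩ | ⟨a, b, hab, hxa, hyb⟩ := exists_ne_or_forall_eq_forall_eq hx hy
  · exact setOf_occCount_eq_infinite_of_exists_ne hxc hyc
  · rw [eq_replicate_length.2 hxa, eq_replicate_length.2 hyb]
    exact setOf_occCount_replicate_eq_infinite hab (length_pos_of_ne_nil hx)
      (length_pos_of_ne_nil hy)

theorem setOf_occCount_eq_finite [Subsingleton α] {x y : List α} (hx : x ≠ []) (hy : y ≠ [])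
    (hxy : x ≠ y) : {z | occCount x z = occCount y z}.Finite := by
  have hrep (z : List α) : z = replicate z.length (x.head hx) :=
    eq_replicate_length.2 fun _ _ => Subsingleton.elim _ _
  have hocc (w z : List α) (hw : w ≠ []) : occCount w z = z.length + 1 - w.length := by
    have := occCount_replicate_replicate (a := x.head hx) (length_pos_of_ne_nil hw) z.length
    rwa [← hrep w, ← hrep z] at this
  have hlen : x.length ≠ y.length := fun h => hxy (by rw [hrep x, hrep y, h])
  refine (finite_length_lt α (max x.length y.length)).subset fun z hz => ?_
  rw [Set.mem_ofPred, hocc x z hx, hocc y z hy] at hz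
  have := length_pos_of_ne_nil hx
  have := length_pos_of_ne_nil hy
  exact show z.length < _ by omega

end OccCount

theorem stmt_17 {α : Type} [Fintype α] [DecidableEq α] (x y : List α)
    (hx : x ≠ []) (hy : y ≠ []) :
    {z : List α | occCount x z = occCount y z}.Finite ↔
      (Fintype.card α = 1 ∧ x ≠ y) := by
  have : Nonempty α := ⟨x.head hx⟩
  constructor
  · intro hfin
    refine ⟨?_, fun hxy => ?_⟩
    · by_contra hcard
      have : Nontrivial α := Fintype.one_lt_card_iff_nontrivial.1 <| by
        have := Fintype.card_pos (α := α)
        omega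
      exact setOf_occCount_eq_infinite hx hy hfin
    · subst hxy
      exact setOf_occCount_eq_self_infinite x hfin
  · rintro ⟨hcard, hxy⟩
    have : Subsingleton α := Fintype.card_le_one_iff_subsingleton.1 hcard.le
    exact setOf_occCount_eq_finite hx hy hxy
end
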